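/- arXiv:2009.07891 — 12 statements merged into one kernel-verified Lean document; each statement's English description precedes it below -/
import Mathlib

section
/- Every complex root z of P satisfies |z| ≤ r, where r denotes the unique positive real root of P. -/
/-!
After division by `t ^ k`, the equation `P(t) = 0` for `t > 0` reads `∑ cᵢ t⁻ⁱ = 1`, and the left side
is decreasing in `t`. For a complex root `z`, the triangle inequality gives `∑ cᵢ ‖z‖⁻ⁱ ≥ 1`, so
`‖z‖` cannot exceed the positive root `r`. With denominators cleared, the monotonicity is the
termwise inequality `t * r ^ i ≤ r * t ^ i` for `1 ≤ i` and `0 ≤ r ≤ t`.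
-/

open Polynomial Finset

theorem isRoot_X_pow_sub_sum_iff {R : Type*} [CommRing R] (k : ℕ) (s : Finset ℕ) (a : ℕ → R)
    (x : R) :
    (X ^ k - ∑ i ∈ s, C (a i) * X ^ (k - i)).IsRoot x ↔ x ^ k = ∑ i ∈ s, a i * x ^ (k - i) := by
  simp only [IsRoot, eval_sub, eval_pow, eval_X, eval_finsetSum, eval_mul, eval_C, sub_eq_zero]

theorem norm_pow_le_sum_of_pow_eq {𝕜 : Type*} [NormedDivisionRing 𝕜] {k : ℕ} {s : Finset ℕ}
    {a : ℕ → 𝕜} {z : 𝕜} (hz : z ^ k = ∑ i ∈ s, a i * z ^ (k - i)) :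
    ‖z‖ ^ k ≤ ∑ i ∈ s, ‖a i‖ * ‖z‖ ^ (k - i) :=
  calc ‖z‖ ^ k = ‖∑ i ∈ s, a i * z ^ (k - i)‖ := by rw [← norm_pow, hz]
    _ ≤ ∑ i ∈ s, ‖a i * z ^ (k - i)‖ := norm_sum_le _ _
    _ = ∑ i ∈ s, ‖a i‖ * ‖z‖ ^ (k - i) := by simp only [norm_mul, norm_pow]

theorem mul_pow_le_mul_pow_of_le {r t : ℝ} (hr : 0 ≤ r) (hrt : r ≤ t) {i : ℕ} (hi : 1 ≤ i) :
    t * r ^ i ≤ r * t ^ i := by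
  obtain ⟨j, rfl⟩ := Nat.exists_eq_add_of_le' hi
  have hrt_pow : r ^ j ≤ t ^ j := pow_le_pow_left₀ hr hrt j
  calc t * r ^ (j + 1) = r * t * r ^ j := by ring
    _ ≤ r * t * t ^ j := by gcongr; exact mul_nonneg hr (hr.trans hrt)
    _ = r * t ^ (j + 1) := by ring

theorem sum_mul_pow_sub_lt_pow_of_lt {k : ℕ} {a : ℕ → ℝ} (ha : ∀ i, 0 ≤ a i) {r t : ℝ}
    (hr : 0 < r) (hrt : r < t) (hroot : r ^ k = ∑ i ∈ Icc 1 k, a i * r ^ (k - i)) :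
    ∑ i ∈ Icc 1 k, a i * t ^ (k - i) < t ^ k := by
  have ht : 0 < t := hr.trans hrt
  have hterm : ∀ i ∈ Icc 1 k, a i * t ^ (k - i) * (t * r ^ k) ≤ a i * r ^ (k - i) * (r * t ^ k) := by
    intro i hi
    obtain ⟨hi1, hik⟩ := mem_Icc.mp hi
    have hsplit : ∀ x : ℝ, x ^ k = x ^ (k - i) * x ^ i := fun x => by
      rw [← pow_add, Nat.sub_add_cancel hik]
    have hmono := mul_pow_le_mul_pow_of_le hr.le hrt.le hi1
    rw [hsplit r, hsplit t]
    calc a i * t ^ (k - i) * (t * (r ^ (k - i) * r ^ i))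
        = a i * t ^ (k - i) * r ^ (k - i) * (t * r ^ i) := by ring
      _ ≤ a i * t ^ (k - i) * r ^ (k - i) * (r * t ^ i) := by
        gcongr; exact mul_nonneg (mul_nonneg (ha i) (by positivity)) (by positivity)
      _ = a i * r ^ (k - i) * (r * (t ^ (k - i) * t ^ i)) := by ring
  have hsum : (∑ i ∈ Icc 1 k, a i * t ^ (k - i)) * t * r ^ k ≤ r * t ^ k * r ^ k := by
    calc (∑ i ∈ Icc 1 k, a i * t ^ (k - i)) * t * r ^ k
        = ∑ i ∈ Icc 1 k, a i * t ^ (k - i) * (t * r ^ k) := by rw [mul_assoc, sum_mul]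
      _ ≤ ∑ i ∈ Icc 1 k, a i * r ^ (k - i) * (r * t ^ k) := sum_le_sum hterm
      _ = r * t ^ k * r ^ k := by rw [← sum_mul, ← hroot]; ring
  have hsum' : (∑ i ∈ Icc 1 k, a i * t ^ (k - i)) * t ≤ r * t ^ k :=
    le_of_mul_le_mul_right hsum (pow_pos hr k)
  nlinarith [pow_pos ht k]

theorem abs_root_le_principal_root_general
    (k : ℕ) (c : ℕ → ℕ)
    (P : Polynomial ℂ)
    (hP : P = X ^ k - ∑ i ∈ Finset.Icc 1 k, C (c i : ℂ) * X ^ (k - i))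
    (r : ℝ) (hr : 0 < r) (hroot : P.IsRoot (r : ℂ)) :
    ∀ z : ℂ, P.IsRoot z → ‖z‖ ≤ r := by
  intro z hz
  subst hP
  rw [isRoot_X_pow_sub_sum_iff] at hz hroot
  have hroot_real : r ^ k = ∑ i ∈ Icc 1 k, (c i : ℝ) * r ^ (k - i) := by exact_mod_cast hroot
  have hz_norm : ‖z‖ ^ k ≤ ∑ i ∈ Icc 1 k, (c i : ℝ) * ‖z‖ ^ (k - i) := by
    simpa only [Complex.norm_natCast] using norm_pow_le_sum_of_pow_eq hz
  by_contra! hlt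
  exact (sum_mul_pow_sub_lt_pow_of_lt (fun i => Nat.cast_nonneg (c i)) hr hlt hroot_real).not_ge
    hz_norm

/-- Every complex root `z` of `P` satisfies `|z| ≤ r`, where `r` is the unique
positive real root of `P`. -/
theorem abs_root_le_principal_root
    (k : ℕ) (hk : 1 ≤ k) (c : ℕ → ℕ) (hck : 0 < c k)
    (P : Polynomial ℂ)
    (hP : P = X ^ k - ∑ i ∈ Finset.Icc 1 k, C (c i : ℂ) * X ^ (k - i))
    (r : ℝ) (hr : 0 < r) (hroot : P.IsRoot (r : ℂ))
    (huniq : ∀ s : ℝ, 0 < s → P.IsRoot (s : ℂ) → s = r) :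
    ∀ z : ℂ, P.IsRoot z → ‖z‖ ≤ r :=
  abs_root_le_principal_root_general k c P hP r hr hroot
end

section
/- If gcd{m ∈ {1,…,k} : c_m ≠ 0} = 1, then every complex root z of P with z ≠ r satisfies |z| < r; that is, r is the unique root of greatest magnitude. -/
/-!
Dividing `P(z) = 0` by `z ^ k` turns it into `∑ c_i (z⁻¹)^i = 1`, whose left side, evaluated on
moduli, is strictly increasing in `|z⁻¹|`. The triangle inequality therefore forces `|z| ≤ r`.
When `|z| = r` the triangle inequality is an equality, so every term `c_i (z⁻¹)^i` is a
nonnegative real; hence `(z / r)^i = 1` for every `i` with `c_i ≠ 0`, and the gcd condition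
gives `z = r`.
-/

open Polynomial

theorem Complex.eq_norm_of_sum_eq_sum_norm {ι : Type*} {s : Finset ι} {w : ι → ℂ}
    (h : ∑ i ∈ s, w i = ((∑ i ∈ s, ‖w i‖ : ℝ) : ℂ)) : ∀ i ∈ s, w i = ‖w i‖ := by
  have hre : ∑ i ∈ s, (w i).re = ∑ i ∈ s, ‖w i‖ := by
    rw [← Complex.re_sum, h, Complex.ofReal_re]
  intro i hi
  have hre_i := (Finset.sum_eq_sum_iff_of_le fun i _ => Complex.re_le_norm (w i)).1 hre i hi
  exact (Complex.norm_of_nonneg' (Complex.re_eq_norm.1 hre_i)).symm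

theorem eq_of_pow_eq_pow_of_gcd_eq_one {G₀ : Type*} [CommGroupWithZero G₀] {s : Finset ℕ}
    (hs : s.gcd id = 1) {a b : G₀} (hb : b ≠ 0) (h : ∀ i ∈ s, a ^ i = b ^ i) : a = b := by
  have hdvd : orderOf (a / b) ∣ s.gcd id :=
    Finset.dvd_gcd fun i hi => orderOf_dvd_of_pow_eq_one <| by
      rw [id, div_pow, h i hi, div_self (pow_ne_zero _ hb)]
  rw [hs, Nat.dvd_one, orderOf_eq_one_iff, div_eq_one_iff_eq hb] at hdvd
  exact hdvd

section ReciprocalEquation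

variable {s : Finset ℕ} {a : ℕ → ℝ}

theorem sum_mul_pow_lt_sum_mul_pow (ha : ∀ i ∈ s, 0 ≤ a i) {j : ℕ} (hj : j ∈ s) (hj0 : j ≠ 0)
    (haj : 0 < a j) {x y : ℝ} (hx : 0 ≤ x) (hxy : x < y) :
    ∑ i ∈ s, a i * x ^ i < ∑ i ∈ s, a i * y ^ i :=
  Finset.sum_lt_sum
    (fun i hi => mul_le_mul_of_nonneg_left (pow_le_pow_left₀ hx hxy.le i) (ha i hi))
    ⟨j, hj, mul_lt_mul_of_pos_left (pow_lt_pow_left₀ hxy hx hj0) haj⟩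

theorem le_norm_of_sum_mul_pow_eq_one (ha : ∀ i ∈ s, 0 ≤ a i) {j : ℕ} (hj : j ∈ s)
    (hj0 : j ≠ 0) (haj : 0 < a j) {ρ : ℝ} (hρ1 : ∑ i ∈ s, a i * ρ ^ i = 1)
    {x : ℂ} (hx : ∑ i ∈ s, (a i : ℂ) * x ^ i = 1) : ρ ≤ ‖x‖ := by
  by_contra! hlt
  have htri : 1 ≤ ∑ i ∈ s, a i * ‖x‖ ^ i :=
    calc 1 = ‖∑ i ∈ s, (a i : ℂ) * x ^ i‖ := by rw [hx, norm_one]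
      _ ≤ ∑ i ∈ s, ‖(a i : ℂ) * x ^ i‖ := norm_sum_le _ _
      _ = ∑ i ∈ s, a i * ‖x‖ ^ i := Finset.sum_congr rfl fun i hi => by
        rw [norm_mul, norm_pow, Complex.norm_of_nonneg (ha i hi)]
  linarith [sum_mul_pow_lt_sum_mul_pow ha hj hj0 haj (norm_nonneg x) hlt]

theorem eq_norm_of_sum_mul_pow_eq_one (ha : ∀ i ∈ s, 0 ≤ a i)
    (hgcd : (s.filter fun i => a i ≠ 0).gcd id = 1) {x : ℂ} (hx0 : x ≠ 0)
    (hx : ∑ i ∈ s, (a i : ℂ) * x ^ i = 1) (hnorm : ∑ i ∈ s, a i * ‖x‖ ^ i = 1) :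
    x = ‖x‖ := by
  have hterm_norm : ∀ i ∈ s, ‖(a i : ℂ) * x ^ i‖ = a i * ‖x‖ ^ i := fun i hi => by
    rw [norm_mul, norm_pow, Complex.norm_of_nonneg (ha i hi)]
  have hterm := Complex.eq_norm_of_sum_eq_sum_norm (s := s) (w := fun i => (a i : ℂ) * x ^ i)
    (by rw [Finset.sum_congr rfl hterm_norm, hx, hnorm, Complex.ofReal_one])
  refine eq_of_pow_eq_pow_of_gcd_eq_one hgcd (by simpa using hx0) fun i hi => ?_
  obtain ⟨his, hai⟩ := Finset.mem_filter.1 hi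
  have hi_eq := hterm i his
  simp only [hterm_norm i his, Complex.ofReal_mul, Complex.ofReal_pow] at hi_eq
  exact mul_left_cancel₀ (Complex.ofReal_ne_zero.2 hai) hi_eq

end ReciprocalEquation

theorem isRoot_sub_sum_iff_sum_mul_inv_pow_eq_one {K : Type*} [Field K] (k : ℕ) (c : ℕ → K)
    {w : K} (hw : w ≠ 0) :
    (X ^ k - ∑ i ∈ Finset.Icc 1 k, C (c i) * X ^ (k - i)).IsRoot w ↔
      ∑ i ∈ Finset.Icc 1 k, c i * w⁻¹ ^ i = 1 := by
  have hterm : ∀ i ∈ Finset.Icc 1 k, c i * w ^ (k - i) * (w ^ k)⁻¹ = c i * w⁻¹ ^ i :=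
    fun i hi => by
      rw [pow_sub₀ w hw (Finset.mem_Icc.1 hi).2, inv_pow]
      field_simp
  simp only [IsRoot, eval_sub, eval_pow, eval_X, eval_finsetSum, eval_mul, eval_C,
    sub_eq_zero]
  rw [← Finset.sum_congr rfl hterm, ← Finset.sum_mul, eq_comm,
    mul_inv_eq_one₀ (pow_ne_zero k hw)]

theorem not_isRoot_zero_sub_sum {K : Type*} [Field K] {k : ℕ} (hk : 1 ≤ k) {c : ℕ → K}
    (hck : c k ≠ 0) : ¬ (X ^ k - ∑ i ∈ Finset.Icc 1 k, C (c i) * X ^ (k - i)).IsRoot 0 := by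
  have hsum : ∑ i ∈ Finset.Icc 1 k, c i * (0 : K) ^ (k - i) = c k := by
    rw [Finset.sum_eq_single_of_mem k (Finset.mem_Icc.2 ⟨hk, le_rfl⟩) fun i hi hik => by
      rw [zero_pow (by have := (Finset.mem_Icc.1 hi).2; omega), mul_zero]]
    simp
  simp [IsRoot, eval_finsetSum, hsum, zero_pow (by omega : k ≠ 0), hck]

theorem principal_root_strictly_dominant_general
    (k : ℕ) (hk : 1 ≤ k) (c : ℕ → ℕ) (hck : 0 < c k)
    (hgcd : Finset.gcd ((Finset.Icc 1 k).filter fun m => c m ≠ 0) id = 1)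
    (P : Polynomial ℂ)
    (hP : P = X ^ k - ∑ i ∈ Finset.Icc 1 k, C (c i : ℂ) * X ^ (k - i))
    (r : ℝ) (hr : 0 < r) (hroot : P.IsRoot (r : ℂ)) :
    ∀ z : ℂ, P.IsRoot z → z ≠ (r : ℂ) → ‖z‖ < r := by
  intro z hz hne
  subst hP
  have ha : ∀ i ∈ Finset.Icc 1 k, 0 ≤ (c i : ℝ) := fun i _ => Nat.cast_nonneg _
  have hz0 : z ≠ 0 := by
    rintro rfl
    exact not_isRoot_zero_sub_sum hk (by exact_mod_cast hck.ne') hz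
  have hzsum : ∑ i ∈ Finset.Icc 1 k, ((c i : ℝ) : ℂ) * z⁻¹ ^ i = 1 := by
    simpa using (isRoot_sub_sum_iff_sum_mul_inv_pow_eq_one k _ hz0).1 hz
  have hrsum : ∑ i ∈ Finset.Icc 1 k, (c i : ℝ) * r⁻¹ ^ i = 1 := by
    exact_mod_cast (isRoot_sub_sum_iff_sum_mul_inv_pow_eq_one k _
      (Complex.ofReal_ne_zero.2 hr.ne')).1 hroot
  have hle : r⁻¹ ≤ ‖z⁻¹‖ := le_norm_of_sum_mul_pow_eq_one ha
    (Finset.mem_Icc.2 ⟨hk, le_rfl⟩) (by omega) (by exact_mod_cast hck) hrsum hzsum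
  rcases hle.lt_or_eq with hlt | heq
  · rwa [norm_inv, inv_lt_inv₀ hr (norm_pos_iff.2 hz0)] at hlt
  · refine absurd (inv_injective ?_) hne
    have := eq_norm_of_sum_mul_pow_eq_one ha (by simpa only [Nat.cast_ne_zero] using hgcd)
      (inv_ne_zero hz0) hzsum (heq ▸ hrsum)
    rw [this, ← heq, Complex.ofReal_inv]

/-- If `gcd {m ∈ {1,…,k} : c_m ≠ 0} = 1`, then every complex root `z ≠ r` of `P`
satisfies `|z| < r`: the principal root `r` is the unique root of greatest magnitude. -/
theorem principal_root_strictly_dominant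
    (k : ℕ) (hk : 1 ≤ k) (c : ℕ → ℕ) (hck : 0 < c k)
    (hgcd : Finset.gcd ((Finset.Icc 1 k).filter fun m => c m ≠ 0) id = 1)
    (P : Polynomial ℂ)
    (hP : P = X ^ k - ∑ i ∈ Finset.Icc 1 k, C (c i : ℂ) * X ^ (k - i))
    (r : ℝ) (hr : 0 < r) (hroot : P.IsRoot (r : ℂ))
    (huniq : ∀ s : ℝ, 0 < s → P.IsRoot (s : ℂ) → s = r) :
    ∀ z : ℂ, P.IsRoot z → z ≠ (r : ℂ) → ‖z‖ < r :=
  principal_root_strictly_dominant_general k hk c hck hgcd P hP r hr hroot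
end

section
/- Suppose P has k pairwise distinct complex roots r_1, …, r_k (i.e., no multiple roots). Let {a_n}_{n≥0} be the sequence with initial values a_0 = a_1 = ⋯ = a_{k−2} = 0 and a_{k−1} = 1, satisfying a_{n+k} = c_1 a_{n+k−1} + c_2 a_{n+k−2} + ⋯ + c_k a_n for all n ≥ 0. Then for all n ≥ 0, a_n = Σ_{i=1}^{k} r_i^n / P′(r_i), where P′ denotes the derivative of P. -/
open Polynomial

private lemma deriv_finset_prod' (s : Finset ℕ) (f : ℕ → ℂ[X]) :
    derivative (∏ i ∈ s, f i) = ∑ i ∈ s, (∏ j ∈ s.erase i, f j) * derivative (f i) := by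
  classical
  rw [Finset.prod_eq_multiset_prod, Polynomial.derivative_prod, Finset.sum_eq_multiset_sum]
  congr 1

private lemma lagrange_coeff_sum (k : ℕ) (r : ℕ → ℂ)
    (hinj : Set.InjOn r ↑(Finset.Icc 1 k)) (m : ℕ) (hm : m < k) :
    (∑ i ∈ Finset.Icc 1 k, r i ^ m / ∏ j ∈ (Finset.Icc 1 k).erase i, (r i - r j))
      = if m = k - 1 then 1 else 0 := by
  set S := Finset.Icc 1 k with hSdef
  have hScard : S.card = k := by simp [hSdef]
  have hX : ((X : ℂ[X]) ^ m) = Lagrange.interpolate S r (fun i => r i ^ m) := by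
    apply Lagrange.eq_interpolate_of_eval_eq _ hinj
    · rw [degree_X_pow, hScard]; exact_mod_cast hm
    · intro i hi; simp
  have hbasis : ∀ i ∈ S, (Lagrange.basis S r i).coeff (k - 1)
      = (∏ j ∈ S.erase i, (r i - r j))⁻¹ := by
    intro i hi
    unfold Lagrange.basis Lagrange.basisDivisor
    rw [Finset.prod_mul_distrib, ← map_prod, coeff_C_mul]
    have hmonic : (∏ j ∈ S.erase i, (X - C (r j))).Monic :=
      monic_prod_of_monic _ _ fun j _ => monic_X_sub_C _
    have hdeg : (∏ j ∈ S.erase i, (X - C (r j))).natDegree = k - 1 := by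
      rw [natDegree_prod_of_monic _ _ fun j _ => monic_X_sub_C _]
      simp [Finset.card_erase_of_mem hi, hScard]
    rw [← hdeg, hmonic.coeff_natDegree, mul_one, ← Finset.prod_inv_distrib]
  have hc := congrArg (fun p : ℂ[X] => p.coeff (k - 1)) hX
  simp only [Lagrange.interpolate_apply, Polynomial.finset_sum_coeff, coeff_C_mul,
    coeff_X_pow] at hc
  rw [Finset.sum_congr rfl fun i hi => by rw [hbasis i hi]] at hc
  rw [Finset.sum_congr rfl fun i (hi : i ∈ S) => (div_eq_mul_inv (r i ^ m) _)]
  rw [← hc]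
  by_cases h : m = k - 1 <;> simp [h, eq_comm]

/-- Generalized Binet formula: if `P` has `k` pairwise distinct roots `r₁, …, r_k`
and the sequence has initial values `0, …, 0, 1`, then `a_n = Σᵢ rᵢ^n / P'(rᵢ)`. -/
theorem binet_formula_distinct_roots
    (k : ℕ) (hk : 1 ≤ k) (c : ℕ → ℕ) (hck : 0 < c k)
    (P : Polynomial ℂ)
    (hP : P = X ^ k - ∑ i ∈ Finset.Icc 1 k, C (c i : ℂ) * X ^ (k - i))
    (r : ℕ → ℂ) (hinj : Set.InjOn r ↑(Finset.Icc 1 k))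
    (hfact : P = ∏ i ∈ Finset.Icc 1 k, (X - C (r i)))
    (a : ℕ → ℂ)
    (hinit : ∀ i, i < k - 1 → a i = 0) (hlast : a (k - 1) = 1)
    (hrec : ∀ n, a (n + k) = ∑ i ∈ Finset.Icc 1 k, (c i : ℂ) * a (n + k - i)) :
    ∀ n, a n = ∑ i ∈ Finset.Icc 1 k, r i ^ n / (Polynomial.derivative P).eval (r i) := by
  set S := Finset.Icc 1 k with hSdef
  have hD : ∀ i ∈ S, (derivative P).eval (r i) = ∏ j ∈ S.erase i, (r i - r j) := by
    intro i hi
    rw [hfact, deriv_finset_prod']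
    simp only [derivative_sub, derivative_X, derivative_C, sub_zero, mul_one]
    rw [eval_finset_sum, Finset.sum_eq_single_of_mem i hi]
    · simp [eval_prod]
    · intro b hb hbi
      rw [eval_prod]
      exact Finset.prod_eq_zero (Finset.mem_erase.mpr ⟨hbi.symm, hi⟩) (by simp)
  have hroot : ∀ i ∈ S, r i ^ k = ∑ j ∈ S, (c j : ℂ) * r i ^ (k - j) := by
    intro i hi
    have h0 : P.eval (r i) = 0 := by
      rw [hfact, eval_prod]
      exact Finset.prod_eq_zero hi (by simp)
    rw [hP] at h0
    simp only [eval_sub, eval_pow, eval_X, eval_finset_sum, eval_mul, eval_C] at h0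
    exact sub_eq_zero.mp h0
  intro n
  induction n using Nat.strong_induction_on with
  | _ n ih =>
    rcases lt_or_ge n k with hn | hn
    · have hsum : (∑ i ∈ S, r i ^ n / (derivative P).eval (r i))
          = if n = k - 1 then 1 else 0 := by
        rw [Finset.sum_congr rfl fun i hi => by rw [hD i hi]]
        exact lagrange_coeff_sum k r hinj n hn
      rw [hsum]
      by_cases h : n = k - 1
      · rw [if_pos h, h, hlast]
      · rw [if_neg h]; exact hinit n (by omega)
    · obtain ⟨m, rfl⟩ : ∃ m, n = m + k := ⟨n - k, by omega⟩
      rw [hrec m]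
      have step : ∀ i ∈ S, (c i : ℂ) * a (m + k - i)
          = ∑ j ∈ S, (c i : ℂ) * (r j ^ (m + k - i) / (derivative P).eval (r j)) := by
        intro i hi
        have h1 := Finset.mem_Icc.mp hi
        rw [ih (m + k - i) (by omega), Finset.mul_sum]
      rw [Finset.sum_congr rfl step, Finset.sum_comm]
      refine Finset.sum_congr rfl fun j hj => ?_
      have key : ∑ i ∈ S, (c i : ℂ) * r j ^ (m + k - i) = r j ^ (m + k) := by
        have h2 : ∀ i ∈ S, (c i : ℂ) * r j ^ (m + k - i)
            = r j ^ m * ((c i : ℂ) * r j ^ (k - i)) := by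
          intro i hi
          have h1 := Finset.mem_Icc.mp hi
          have h3 : m + k - i = m + (k - i) := by omega
          rw [h3, pow_add]; ring
        rw [Finset.sum_congr rfl h2, ← Finset.mul_sum, ← hroot j hj, ← pow_add]
      rw [Finset.sum_congr rfl fun i _ => (mul_div_assoc ((c i : ℂ))
        (r j ^ (m + k - i)) _).symm, ← Finset.sum_div, key]
end

section
/- In the Zeroing Algorithm: (1) the sequence t ↦ q(1,t) satisfies the recurrence specified by P, i.e., q(1,t) = c_1 q(1,t−1) + c_2 q(1,t−2) + ⋯ + c_k q(1,t−k) for all t ≥ k; and (2) for each 1 ≤ n ≤ k and all t ≥ k + 1 − n, q(n,t) = Σ_{i=0}^{k−n} c_{n+i} · q(1, t−(i+1)), a linear combination of earlier values of q(1,·) with non-negative weights. -/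
open Polynomial

/-- In the Zeroing Algorithm, (1) the sequence `t ↦ q(1,t)` satisfies the recurrence
specified by `P`, and (2) each `q(n,t)` is a linear combination of earlier values of
`q(1,·)` with the non-negative weights `c_{n+i}`.  Here `q(n,t)` is the coefficient of
`x^(k-n)` in `Q_t`. -/
theorem zeroing_algorithm_coefficients
    (k : ℕ) (hk : 1 ≤ k) (c : ℕ → ℕ) (hck : 0 < c k)
    (P : Polynomial ℝ)
    (hP : P = X ^ k - ∑ i ∈ Finset.Icc 1 k, C (c i : ℝ) * X ^ (k - i))
    (β : ℕ → ℝ)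
    (Q : ℕ → Polynomial ℝ)
    (hQ0 : Q 0 = ∑ n ∈ Finset.Icc 1 k, C (β n) * X ^ (k - n))
    (hQt : ∀ t, 1 ≤ t → Q t = X * Q (t - 1) - C ((Q (t - 1)).coeff (k - 1)) * P) :
    (∀ t, k ≤ t →
      (Q t).coeff (k - 1) = ∑ i ∈ Finset.Icc 1 k, (c i : ℝ) * (Q (t - i)).coeff (k - 1)) ∧
    (∀ n, 1 ≤ n → n ≤ k → ∀ t, k + 1 - n ≤ t →
      (Q t).coeff (k - n) =
        ∑ i ∈ Finset.range (k - n + 1), (c (n + i) : ℝ) * (Q (t - (i + 1))).coeff (k - 1)) := by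
  have hPcoeff : ∀ n, 1 ≤ n → n ≤ k → P.coeff (k - n) = -(c n : ℝ) := by
    intro n h1 h2
    rw [hP, Polynomial.coeff_sub, Polynomial.coeff_X_pow, Polynomial.finset_sum_coeff]
    simp only [Polynomial.coeff_C_mul, Polynomial.coeff_X_pow]
    rw [if_neg (by omega)]
    rw [Finset.sum_eq_single n]
    · rw [if_pos rfl]; ring
    · intro i hi hne
      simp only [Finset.mem_Icc] at hi
      rw [if_neg (by omega)]; ring
    · intro h; exact absurd (Finset.mem_Icc.mpr ⟨h1, h2⟩) h
  have hstep : ∀ t n, 1 ≤ t → 1 ≤ n → n ≤ k →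
      (Q t).coeff (k - n) = (X * Q (t - 1)).coeff (k - n)
        + (c n : ℝ) * (Q (t - 1)).coeff (k - 1) := by
    intro t n ht h1 h2
    rw [hQt t ht, Polynomial.coeff_sub, Polynomial.coeff_C_mul, hPcoeff n h1 h2]
    ring
  have claim2 : ∀ d, d ≤ k - 1 → ∀ t, d + 1 ≤ t →
      (Q t).coeff d = ∑ i ∈ Finset.range (d + 1),
        (c (k - d + i) : ℝ) * (Q (t - (i + 1))).coeff (k - 1) := by
    intro d
    induction d with
    | zero =>
      intro _ t ht
      have h := hstep t k ht hk le_rfl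
      rw [Nat.sub_self] at h
      rw [Polynomial.mul_coeff_zero, Polynomial.coeff_X_zero, zero_mul, zero_add] at h
      rw [h, Finset.sum_range_one]
      norm_num
    | succ d ih =>
      intro hd t ht
      have h := hstep t (k - (d + 1)) (by omega) (by omega) (by omega)
      rw [show k - (k - (d + 1)) = d + 1 by omega] at h
      rw [h, Polynomial.coeff_X_mul, ih (by omega) (t - 1) (by omega)]
      conv_rhs => rw [Finset.sum_range_succ']
      congr 1
      · refine Finset.sum_congr rfl fun i _ => ?_
        rw [show k - (d + 1) + (i + 1) = k - d + i by omega,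
          show t - (i + 1 + 1) = t - 1 - (i + 1) by omega]
  constructor
  · intro t ht
    have h := claim2 (k - 1) (by omega) t (by omega)
    rw [show k - 1 + 1 = k by omega] at h
    rw [h, show Finset.Icc 1 k = Finset.Ico 1 (k + 1) by rw [Finset.Ico_add_one_right_eq_Icc],
      Finset.sum_Ico_eq_sum_range]
    refine Finset.sum_congr rfl fun i _ => ?_
    rw [show k - (k - 1) + i = 1 + i by omega, show t - (i + 1) = t - (1 + i) by omega]
  · intro n h1 h2 t ht
    have h := claim2 (k - n) (by omega) t (by omega)
    rw [show k - (k - n) = n by omega] at h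
    exact h
end

section
/- In the Zeroing Algorithm one has Q_t(r) = r^t · Q_0(r) for all t ≥ 0; consequently, for each 1 ≤ n ≤ k the limit lim_{t→∞} q(n,t)/r^t exists and is positive, zero, or negative according as Q_0(r) is positive, zero, or negative. -/
/-!
Evaluating `Q_{t+1} = X Q_t - q(1,t) P` at the root `r` gives `Q_{t+1}(r) = r Q_t(r)`.

Unrolling the coefficient recursion shows that `a_t = q(1,t) / r^t` satisfies the renewal
equation `a_v = ∑ p_m a_{v-m}` with probability weights `p_m = c_m / r^m`. For such an equation
the maximum of `a` over a window of length `k + 1` is nonincreasing, and since every large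
integer is a sum of elements of the support of `p` (its gcd is `1`), each later window is pulled a
fixed fraction of the way down to any single earlier value; hence `a_t` converges to some `A`.
Every coefficient `q(n,t) / r^t` is a fixed combination, with positive total weight `w_n`, of
shifted values of `a`, so it tends to `w_n A`. Passing to the limit in
`∑_j q_j(t) r^j / r^t = Q_0(r)` gives `Q_0(r) = A ∑_j w_j r^j`, which fixes the sign of `A`.
-/

open Polynomial Filter Finset Topology

theorem Nat.exists_forall_ge_mem_closure_of_gcd_eq_one {S : Finset ℕ} (h : S.gcd id = 1) :
    ∃ N, ∀ n ≥ N, n ∈ AddSubmonoid.closure (S : Set ℕ) := by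
  obtain ⟨N, hN⟩ := Nat.exists_mem_closure_of_ge (S : Set ℕ)
  have h1 : Nat.setGcd S ∣ 1 := h ▸ Finset.dvd_gcd fun m hm => Nat.setGcd_dvd_of_mem hm
  exact ⟨N, fun n hn => hN n hn (h1.trans (one_dvd n))⟩

structure IsRenewalSeq (k : ℕ) (p a : ℕ → ℝ) : Prop where
  nonneg : ∀ m ∈ Icc 1 k, 0 ≤ p m
  sum_eq_one : ∑ m ∈ Icc 1 k, p m = 1
  eq_sum : ∀ v, k ≤ v → a v = ∑ m ∈ Icc 1 k, p m * a (v - m)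

noncomputable def windowMax (k : ℕ) (a : ℕ → ℝ) (t : ℕ) : ℝ :=
  (Icc t (t + k)).sup' (nonempty_Icc.2 le_self_add) a

lemma le_windowMax {k t v : ℕ} {a : ℕ → ℝ} (hv : v ∈ Icc t (t + k)) : a v ≤ windowMax k a t :=
  le_sup' a hv

lemma windowMax_le {k t : ℕ} {a : ℕ → ℝ} {B : ℝ} (hB : ∀ v ∈ Icc t (t + k), a v ≤ B) :
    windowMax k a t ≤ B :=
  sup'_le _ _ hB

namespace IsRenewalSeq

variable {k : ℕ} {p a : ℕ → ℝ}

lemma neg (h : IsRenewalSeq k p a) : IsRenewalSeq k p (-a) where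
  nonneg := h.nonneg
  sum_eq_one := h.sum_eq_one
  eq_sum v hv := by simp [h.eq_sum v hv, Finset.sum_neg_distrib]

lemma le_of_forall_lt_le (h : IsRenewalSeq k p a) {s : ℕ} {B : ℝ}
    (hB : ∀ i < k, a (s + i) ≤ B) (v : ℕ) (hsv : s ≤ v) : a v ≤ B := by
  induction v using Nat.strong_induction_on with
  | _ v ih =>
    by_cases hv : v < s + k
    · simpa [Nat.add_sub_cancel' hsv] using hB (v - s) (by omega)
    · calc a v = ∑ m ∈ Icc 1 k, p m * a (v - m) := h.eq_sum v (by omega)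
        _ ≤ ∑ m ∈ Icc 1 k, p m * B := by
          refine sum_le_sum fun m hm => mul_le_mul_of_nonneg_left ?_ (h.nonneg m hm)
          rw [mem_Icc] at hm
          exact ih _ (by omega) (by omega)
        _ = B := by rw [← sum_mul, h.sum_eq_one, one_mul]

lemma le_windowMax_of_le (h : IsRenewalSeq k p a) {t v : ℕ} (htv : t ≤ v) :
    a v ≤ windowMax k a t :=
  h.le_of_forall_lt_le (fun i hi => le_windowMax (mem_Icc.2 ⟨le_self_add, by omega⟩)) v htv

lemma antitone_windowMax (h : IsRenewalSeq k p a) : Antitone (windowMax k a) :=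
  antitone_nat_of_succ_le fun t =>
    windowMax_le fun v hv => h.le_windowMax_of_le (by rw [mem_Icc] at hv; omega)

lemma neg_windowMax_neg_le (h : IsRenewalSeq k p a) (v : ℕ) : -windowMax k (-a) 0 ≤ a v :=
  neg_le.1 (h.neg.le_windowMax_of_le v.zero_le)

lemma pow_mul_sub_le_sub_of_mem_closure (h : IsRenewalSeq k p a) {δ B : ℝ} {s₀ : ℕ}
    (hδ0 : 0 ≤ δ) (hδ1 : δ ≤ 1) (hδp : ∀ m ∈ Icc 1 k, p m ≠ 0 → δ ≤ p m)
    (hB : ∀ v, s₀ ≤ v → a v ≤ B) {d : ℕ}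
    (hd : d ∈ AddSubmonoid.closure (↑({m ∈ Icc 1 k | p m ≠ 0} : Finset ℕ) : Set ℕ))
    {s : ℕ} (hs : s₀ + k ≤ s) :
    δ ^ d * (B - a s) ≤ B - a (s + d) := by
  induction hd using AddSubmonoid.closure_induction generalizing s with
  | mem d hd =>
    rw [coe_filter, Set.mem_ofPred_eq] at hd
    obtain ⟨hdk, hpd⟩ := hd
    have hgap : ∀ m ∈ Icc 1 k, 0 ≤ p m * (B - a (s + d - m)) := fun m hm =>
      mul_nonneg (h.nonneg m hm) (sub_nonneg.2 (hB _ (by rw [mem_Icc] at hm; omega)))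
    calc δ ^ d * (B - a s) ≤ p d * (B - a s) := by
          refine mul_le_mul_of_nonneg_right ?_ (sub_nonneg.2 (hB s (by omega)))
          exact (pow_le_of_le_one hδ0 hδ1 (by rw [mem_Icc] at hdk; omega)).trans (hδp d hdk hpd)
      _ ≤ ∑ m ∈ Icc 1 k, p m * (B - a (s + d - m)) := by
          simpa using single_le_sum hgap hdk
      _ = B - a (s + d) := by
          simp only [mul_sub, sum_sub_distrib, ← sum_mul, h.sum_eq_one, one_mul,
            h.eq_sum (s + d) (by omega)]
  | zero => simp
  | add x y _ _ hx hy =>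
    calc δ ^ (x + y) * (B - a s) = δ ^ y * (δ ^ x * (B - a s)) := by ring
      _ ≤ δ ^ y * (B - a (s + x)) := mul_le_mul_of_nonneg_left (hx hs) (by positivity)
      _ ≤ B - a (s + (x + y)) := by simpa [add_assoc] using hy (s := s + x) (by omega)

lemma exists_windowMax_le (h : IsRenewalSeq k p a)
    (hgcd : ({m ∈ Icc 1 k | p m ≠ 0} : Finset ℕ).gcd id = 1) :
    ∃ N : ℕ, ∃ ε > 0, ∀ t,
      windowMax k a (t + (k + N)) ≤ windowMax k a t - ε * (windowMax k a t - a (t + k)) := by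
  set S : Finset ℕ := {m ∈ Icc 1 k | p m ≠ 0}
  have hS : S.Nonempty := nonempty_iff_ne_empty.2 fun hS => by simp [hS] at hgcd
  set δ := S.inf' hS p
  have hδp : ∀ m ∈ Icc 1 k, p m ≠ 0 → δ ≤ p m := fun m hm hpm =>
    inf'_le p (mem_filter.2 ⟨hm, hpm⟩)
  have hδ0 : 0 < δ := (lt_inf'_iff hS).2 fun m hm =>
    (h.nonneg m (mem_filter.1 hm).1).lt_of_ne' (mem_filter.1 hm).2
  have hδ1 : δ ≤ 1 := by
    obtain ⟨m, hm⟩ := id hS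
    calc δ ≤ p m := inf'_le p hm
      _ ≤ ∑ m ∈ Icc 1 k, p m := single_le_sum h.nonneg (mem_filter.1 hm).1
      _ = 1 := h.sum_eq_one
  obtain ⟨N, hN⟩ := Nat.exists_forall_ge_mem_closure_of_gcd_eq_one hgcd
  refine ⟨N, δ ^ (N + k), pow_pos hδ0 _, fun t => windowMax_le fun v hv => ?_⟩
  rw [mem_Icc] at hv
  have hgap := h.pow_mul_sub_le_sub_of_mem_closure hδ0.le hδ1 hδp (s₀ := t)
    (fun v hv => h.le_windowMax_of_le hv) (hN (v - (t + k)) (by omega)) le_rfl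
  rw [Nat.add_sub_cancel' (by omega)] at hgap
  have hpow : δ ^ (N + k) ≤ δ ^ (v - (t + k)) := pow_le_pow_of_le_one hδ0.le hδ1 (by omega)
  have hnonneg : 0 ≤ windowMax k a t - a (t + k) :=
    sub_nonneg.2 (h.le_windowMax_of_le le_self_add)
  linarith [mul_le_mul_of_nonneg_right hpow hnonneg]

theorem tendsto (h : IsRenewalSeq k p a)
    (hgcd : ({m ∈ Icc 1 k | p m ≠ 0} : Finset ℕ).gcd id = 1) : ∃ A, Tendsto a atTop (𝓝 A) := by
  obtain ⟨N, ε, hε, hcontr⟩ := h.exists_windowMax_le hgcd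
  set M := windowMax k a
  have hM : Tendsto M atTop (𝓝 (⨅ t, M t)) :=
    tendsto_atTop_ciInf h.antitone_windowMax ⟨-windowMax k (-a) 0, by
      rintro _ ⟨t, rfl⟩
      exact (h.neg_windowMax_neg_le t).trans (h.le_windowMax_of_le le_rfl)⟩
  have hlower : Tendsto (fun t => M t - (M t - M (t + (k + N))) / ε) atTop (𝓝 (⨅ t, M t)) := by
    simpa using hM.sub ((hM.sub (hM.comp (tendsto_add_atTop_nat _))).div_const ε)
  refine ⟨⨅ t, M t, (tendsto_add_atTop_iff_nat k).1 <|
    tendsto_of_tendsto_of_tendsto_of_le_of_le hlower hM (fun t => ?_)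
      (fun t => h.le_windowMax_of_le le_self_add)⟩
  have := hcontr t
  rw [sub_le_comm, le_div_iff₀ hε]
  linarith

end IsRenewalSeq

namespace ZeroingAlgorithm

noncomputable def charPoly (k : ℕ) (c : ℕ → ℕ) : ℝ[X] :=
  X ^ k - ∑ i ∈ Icc 1 k, C (c i : ℝ) * X ^ (k - i)

def IsRun (k : ℕ) (c : ℕ → ℕ) (Q : ℕ → ℝ[X]) : Prop :=
  ∀ t, Q (t + 1) = X * Q t - C ((Q t).coeff (k - 1)) * charPoly k c

variable {k : ℕ} {c : ℕ → ℕ} {Q : ℕ → ℝ[X]}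

lemma coeff_charPoly_of_le {j : ℕ} (hj : k ≤ j) :
    (charPoly k c).coeff j = if j = k then 1 else 0 := by
  rw [charPoly, coeff_sub, coeff_X_pow, finsetSum_coeff, sum_eq_zero, sub_zero]
  intro i hi
  rw [mem_Icc] at hi
  rw [coeff_C_mul_X_pow, if_neg (by omega)]

lemma coeff_charPoly_of_lt {j : ℕ} (hj : j < k) : (charPoly k c).coeff j = -c (k - j) := by
  rw [charPoly, coeff_sub, coeff_X_pow, if_neg hj.ne, finsetSum_coeff, zero_sub,
    sum_eq_single_of_mem (k - j) (mem_Icc.2 ⟨by omega, by omega⟩)]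
  · rw [coeff_C_mul_X_pow, if_pos (by omega)]
  · intro i hi hij
    rw [mem_Icc] at hi
    rw [coeff_C_mul_X_pow, if_neg (by omega)]

lemma sum_div_pow_eq_one {r : ℝ} (hr : r ≠ 0) (hroot : (charPoly k c).IsRoot r) :
    ∑ m ∈ Icc 1 k, (c m : ℝ) / r ^ m = 1 := by
  have hsum : ∑ m ∈ Icc 1 k, (c m : ℝ) * r ^ (k - m) = r ^ k := by
    have := hroot.eq_zero
    simp only [charPoly, eval_sub, eval_pow, eval_X, eval_finsetSum, eval_mul, eval_C] at this
    linarith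
  have hterm : ∀ m ∈ Icc 1 k, (c m : ℝ) / r ^ m = c m * r ^ (k - m) / r ^ k := fun m hm => by
    rw [mem_Icc] at hm
    rw [div_eq_div_iff (pow_ne_zero m hr) (pow_ne_zero k hr), mul_assoc, ← pow_add,
      Nat.sub_add_cancel hm.2]
  rw [sum_congr rfl hterm, ← sum_div, hsum, div_self (pow_ne_zero k hr)]

lemma eval_eq_pow_mul (hQ : IsRun k c Q) {r : ℝ} (hroot : (charPoly k c).IsRoot r) (t : ℕ) :
    (Q t).eval r = r ^ t * (Q 0).eval r := by
  induction t with
  | zero => simp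
  | succ t ih =>
    rw [hQ, eval_sub, eval_mul, eval_mul, eval_X, hroot.eq_zero, mul_zero, sub_zero, ih, pow_succ]
    ring

lemma degree_lt (hQ : IsRun k c Q) (hk : 1 ≤ k) (h0 : (Q 0).degree < k) (t : ℕ) :
    (Q t).degree < k := by
  induction t with
  | zero => exact h0
  | succ t ih =>
    rw [degree_lt_iff_coeff_zero] at ih ⊢
    intro j hj
    obtain ⟨j, rfl⟩ := Nat.exists_eq_add_one.2 (show 0 < j by omega)
    rw [hQ, coeff_sub, coeff_X_mul, coeff_C_mul, coeff_charPoly_of_le hj]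
    rcases hj.eq_or_lt with hjk | hjk
    · subst hjk
      rw [if_pos rfl, Nat.add_sub_cancel, mul_one, sub_self]
    · rw [ih j (by omega), if_neg hjk.ne', mul_zero, sub_zero]

lemma coeff_succ_zero (hQ : IsRun k c Q) (hk : 1 ≤ k) (t : ℕ) :
    (Q (t + 1)).coeff 0 = c k * (Q t).coeff (k - 1) := by
  rw [hQ, coeff_sub, mul_coeff_zero, coeff_X_zero, coeff_C_mul, coeff_charPoly_of_lt hk,
    Nat.sub_zero]
  ring

lemma coeff_succ_succ (hQ : IsRun k c Q) {j : ℕ} (hj : j + 1 < k) (t : ℕ) :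
    (Q (t + 1)).coeff (j + 1) = (Q t).coeff j + c (k - (j + 1)) * (Q t).coeff (k - 1) := by
  rw [hQ, coeff_sub, coeff_X_mul, coeff_C_mul, coeff_charPoly_of_lt hj]
  ring

lemma coeff_add_succ (hQ : IsRun k c Q) (t : ℕ) {j : ℕ} (hj : j < k) :
    (Q (t + (j + 1))).coeff j = ∑ i ∈ range (j + 1), c (k - i) * (Q (t + i)).coeff (k - 1) := by
  induction j with
  | zero => simp [coeff_succ_zero hQ (by omega)]
  | succ j ih =>
    rw [← add_assoc, coeff_succ_succ hQ hj, ih (by omega), sum_range_succ _ (j + 1)]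

lemma coeff_pred_eq_sum (hQ : IsRun k c Q) (hk : 1 ≤ k) {v : ℕ} (hv : k ≤ v) :
    (Q v).coeff (k - 1) = ∑ m ∈ Icc 1 k, c m * (Q (v - m)).coeff (k - 1) := by
  have h := coeff_add_succ hQ (v - k) (j := k - 1) (by omega)
  rw [Nat.sub_add_cancel hk, Nat.sub_add_cancel hv] at h
  rw [h]
  refine sum_nbij' (k - ·) (k - ·) ?_ ?_ ?_ ?_ ?_ <;> intro i hi <;>
    simp only [mem_range, mem_Icc] at hi ⊢
  any_goals omega
  rw [show v - k + i = v - (k - i) by omega]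

lemma isRenewalSeq (hQ : IsRun k c Q) (hk : 1 ≤ k) {r : ℝ} (hr : 0 < r)
    (hroot : (charPoly k c).IsRoot r) :
    IsRenewalSeq k (fun m => c m / r ^ m) (fun t => (Q t).coeff (k - 1) / r ^ t) where
  nonneg _ _ := by positivity
  sum_eq_one := sum_div_pow_eq_one hr.ne' hroot
  eq_sum v hv := by
    rw [coeff_pred_eq_sum hQ hk hv, sum_div]
    refine sum_congr rfl fun m hm => ?_
    rw [mem_Icc] at hm
    rw [← Nat.add_sub_cancel' (hm.2.trans hv), pow_add, Nat.add_sub_cancel_left]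
    field_simp

noncomputable def limitWeight (k : ℕ) (c : ℕ → ℕ) (r : ℝ) (j : ℕ) : ℝ :=
  ∑ i ∈ range (j + 1), (c (k - i) : ℝ) / r ^ (j + 1 - i)

lemma limitWeight_pos {r : ℝ} (hr : 0 < r) (hck : 0 < c k) (j : ℕ) : 0 < limitWeight k c r j :=
  sum_pos' (fun _ _ => by positivity) ⟨0, by simp, by simp only [Nat.sub_zero]; positivity⟩

lemma tendsto_coeff_div_pow (hQ : IsRun k c Q) {r : ℝ} (hr : r ≠ 0) {A : ℝ}
    (hA : Tendsto (fun t => (Q t).coeff (k - 1) / r ^ t) atTop (𝓝 A)) {j : ℕ} (hj : j < k) :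
    Tendsto (fun t => (Q t).coeff j / r ^ t) atTop (𝓝 (limitWeight k c r j * A)) := by
  have hshift : ∀ t, (Q (t + (j + 1))).coeff j / r ^ (t + (j + 1)) = ∑ i ∈ range (j + 1),
      c (k - i) / r ^ (j + 1 - i) * ((Q (t + i)).coeff (k - 1) / r ^ (t + i)) := by
    intro t
    rw [coeff_add_succ hQ t hj, sum_div]
    refine sum_congr rfl fun i hi => ?_
    rw [mem_range] at hi
    rw [show t + (j + 1) = (j + 1 - i) + (t + i) by omega, pow_add]
    field_simp
  refine (tendsto_add_atTop_iff_nat (j + 1)).1 ?_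
  simp_rw [hshift, limitWeight, sum_mul]
  exact tendsto_finsetSum _ fun i _ => (hA.comp (tendsto_add_atTop_nat i)).const_mul _

lemma eval_eq_mul_sum (hQ : IsRun k c Q) (hk : 1 ≤ k) (h0 : (Q 0).degree < k) {r : ℝ}
    (hr : r ≠ 0) (hroot : (charPoly k c).IsRoot r)
    {A : ℝ} (hA : Tendsto (fun t => (Q t).coeff (k - 1) / r ^ t) atTop (𝓝 A)) :
    (Q 0).eval r = A * ∑ j ∈ range k, limitWeight k c r j * r ^ j := by
  have hconst : ∀ t, ∑ j ∈ range k, (Q t).coeff j / r ^ t * r ^ j = (Q 0).eval r := fun t => by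
    have hdeg : (Q t).natDegree < k := by
      rcases eq_or_ne (Q t) 0 with hQt | hQt
      · rw [hQt, natDegree_zero]
        exact hk
      · exact (natDegree_lt_iff_degree_lt hQt).2 (degree_lt hQ hk h0 t)
    simp only [div_mul_eq_mul_div]
    rw [← sum_div, ← eval_eq_sum_range' hdeg, eval_eq_pow_mul hQ hroot,
      mul_div_cancel_left₀ _ (pow_ne_zero t hr)]
  have hlim := tendsto_finsetSum (range k) fun j hj =>
    (tendsto_coeff_div_pow hQ hr hA (mem_range.1 hj)).mul_const (r ^ j)
  simp_rw [hconst] at hlim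
  rw [tendsto_nhds_unique tendsto_const_nhds hlim, mul_sum]
  exact sum_congr rfl fun j _ => by ring

end ZeroingAlgorithm

theorem zeroing_algorithm_eval_and_limits_general
    (k : ℕ) (hk : 1 ≤ k) (c : ℕ → ℕ) (hck : 0 < c k)
    (hgcd : Finset.gcd ((Finset.Icc 1 k).filter fun m => c m ≠ 0) id = 1)
    (P : Polynomial ℝ)
    (hP : P = X ^ k - ∑ i ∈ Finset.Icc 1 k, C (c i : ℝ) * X ^ (k - i))
    (r : ℝ) (hr : 0 < r) (hroot : P.IsRoot r)
    (β : ℕ → ℝ)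
    (Q : ℕ → Polynomial ℝ)
    (hQ0 : Q 0 = ∑ n ∈ Finset.Icc 1 k, C (β n) * X ^ (k - n))
    (hQt : ∀ t, 1 ≤ t → Q t = X * Q (t - 1) - C ((Q (t - 1)).coeff (k - 1)) * P) :
    (∀ t, (Q t).eval r = r ^ t * (Q 0).eval r) ∧
    ∀ n, 1 ≤ n → n ≤ k →
      ∃ L : ℝ,
        Filter.Tendsto (fun t => (Q t).coeff (k - n) / r ^ t) Filter.atTop (nhds L) ∧
        (0 < (Q 0).eval r → 0 < L) ∧
        ((Q 0).eval r = 0 → L = 0) ∧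
        ((Q 0).eval r < 0 → L < 0) := by
  open ZeroingAlgorithm in
  obtain rfl : P = charPoly k c := hP
  have hQ : IsRun k c Q := fun t => hQt (t + 1) le_add_self
  have h0 : (Q 0).degree < k := by
    rw [hQ0, degree_lt_iff_coeff_zero]
    intro j hj
    rw [finsetSum_coeff]
    exact sum_eq_zero fun n hn => by rw [coeff_C_mul_X_pow, if_neg (by rw [mem_Icc] at hn; omega)]
  have hsupp : ({m ∈ Icc 1 k | (c m : ℝ) / r ^ m ≠ 0} : Finset ℕ) = {m ∈ Icc 1 k | c m ≠ 0} :=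
    filter_congr fun m _ => by simp [hr.ne']
  obtain ⟨A, hA⟩ := (isRenewalSeq hQ hk hr hroot).tendsto (hsupp ▸ hgcd)
  set K := ∑ j ∈ range k, limitWeight k c r j * r ^ j
  have hK : 0 < K := sum_pos (fun j _ => mul_pos (limitWeight_pos hr hck j) (pow_pos hr j))
    (nonempty_range_iff.2 (by omega))
  have hAK : A = (Q 0).eval r / K := by
    rw [eval_eq_mul_sum hQ hk h0 hr.ne' hroot hA, mul_div_cancel_right₀ _ hK.ne']
  refine ⟨eval_eq_pow_mul hQ hroot, fun n hn hnk => ?_⟩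
  have hw : 0 < limitWeight k c r (k - n) / K := div_pos (limitWeight_pos hr hck _) hK
  refine ⟨(Q 0).eval r * (limitWeight k c r (k - n) / K), ?_,
    fun h => mul_pos h hw, fun h => by rw [h, zero_mul], fun h => mul_neg_of_neg_of_pos h hw⟩
  convert tendsto_coeff_div_pow hQ hr.ne' hA (j := k - n) (by omega) using 2
  rw [hAK]
  ring

/-- In the Zeroing Algorithm, `Q_t(r) = r^t · Q_0(r)` for all `t ≥ 0`, and for each
`1 ≤ n ≤ k` the limit `lim_t q(n,t)/r^t` exists and is positive, zero, or negative
according as `Q_0(r)` is positive, zero, or negative. -/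
theorem zeroing_algorithm_eval_and_limits
    (k : ℕ) (hk : 1 ≤ k) (c : ℕ → ℕ) (hck : 0 < c k)
    (hgcd : Finset.gcd ((Finset.Icc 1 k).filter fun m => c m ≠ 0) id = 1)
    (P : Polynomial ℝ)
    (hP : P = X ^ k - ∑ i ∈ Finset.Icc 1 k, C (c i : ℝ) * X ^ (k - i))
    (r : ℝ) (hr : 0 < r) (hroot : P.IsRoot r)
    (β : ℕ → ℝ) (hβ : ∃ n ∈ Finset.Icc 1 k, β n ≠ 0)
    (Q : ℕ → Polynomial ℝ)
    (hQ0 : Q 0 = ∑ n ∈ Finset.Icc 1 k, C (β n) * X ^ (k - n))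
    (hQt : ∀ t, 1 ≤ t → Q t = X * Q (t - 1) - C ((Q (t - 1)).coeff (k - 1)) * P) :
    (∀ t, (Q t).eval r = r ^ t * (Q 0).eval r) ∧
    ∀ n, 1 ≤ n → n ≤ k →
      ∃ L : ℝ,
        Filter.Tendsto (fun t => (Q t).coeff (k - n) / r ^ t) Filter.atTop (nhds L) ∧
        (0 < (Q 0).eval r → 0 < L) ∧
        ((Q 0).eval r = 0 → L = 0) ∧
        ((Q 0).eval r < 0 → L < 0) :=
  zeroing_algorithm_eval_and_limits_general k hk c hck hgcd P hP r hr hroot β Q hQ0 hQt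
end

section
/- The Zeroing Algorithm terminates (i.e., there exists t ≥ 0 such that every coefficient of Q_t is ≤ 0) if and only if Q_0(r) < 0. -/
/-!
Write `s t` for the coefficient of `X ^ (k - 1)` in `Q t`. Since `Q (t + 1) = X * Q t - s t • P`
and `P r = 0`, every `Q t` has degree `< k` and `Q t (r) = r ^ t * Q 0 (r)`. Unrolling the
recursion, for `t ≥ k` each coefficient of `Q t` is a nonnegative combination of
`s (t - k), …, s (t - 1)`; in particular `s n = ∑ c m * s (n - m)`, so `σ t = s t / r ^ t` is a
running weighted average of its last `k` values, with weights `c m / r ^ m` summing to `1`.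

If all coefficients of `Q t` are `≤ 0`, then `Q t (r) < 0` unless `Q t = 0`, which `P 0 ≠ 0`
excludes by running the recursion backwards. Conversely, `Q 0 (r)` is a fixed positive combination
of the values of `σ` on any window of `k` consecutive times, so if `Q 0 (r) < 0` every window holds
a value `σ x ≤ L < 0`. The gcd condition makes every large shift a sum of lags `m` with `c m ≠ 0`,
so such a value lowers the running upper bound of `σ` by a fixed amount after a bounded delay.
Hence `σ` is eventually negative, and then all coefficients of `Q t` are `≤ 0` for large `t`.
-/

open Polynomial Finset Filter

lemma Nat.setGcd_coe_finset (T : Finset ℕ) : Nat.setGcd (T : Set ℕ) = T.gcd id :=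
  Nat.dvd_antisymm (Finset.dvd_gcd fun _ hm => Nat.setGcd_dvd_of_mem hm)
    (Nat.dvd_setGcd_iff.mpr fun _ hm => Finset.gcd_dvd hm)

lemma eventually_neg_of_forall_eventually_le_sub {α : Type*} {l : Filter α} {g : α → ℝ}
    {ε : ℝ} (hε : 0 < ε)
    (hdesc : ∀ M, 0 ≤ M → (∀ᶠ x in l, g x ≤ M) → ∀ᶠ x in l, g x ≤ M - ε)
    {M : ℝ} (hM : ∀ᶠ x in l, g x ≤ M) : ∀ᶠ x in l, g x < 0 := by
  obtain ⟨n, hn⟩ := exists_nat_gt (M / ε)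
  induction n generalizing M with
  | zero =>
    have hM0 : M < 0 := by simpa [div_neg_iff, hε, hε.not_gt] using hn
    exact hM.mono fun x hx => hx.trans_lt hM0
  | succ n ih =>
    rcases lt_or_ge M 0 with hM0 | hM0
    · exact hM.mono fun x hx => hx.trans_lt hM0
    · refine ih (hdesc M hM0 hM) ?_
      rw [sub_div, div_self hε.ne']
      push_cast at hn
      linarith

structure IsAveragingRecurrence (k : ℕ) (p f : ℕ → ℝ) : Prop where
  weight_nonneg : ∀ m, 0 ≤ p m
  sum_weight : ∑ m ∈ Icc 1 k, p m = 1
  eq_sum : ∀ n, f (n + k) = ∑ m ∈ Icc 1 k, p m * f (n + k - m)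

namespace IsAveragingRecurrence

variable {k : ℕ} {p f : ℕ → ℝ}

lemma weight_le_one (h : IsAveragingRecurrence k p f) {m : ℕ} (hm : m ∈ Icc 1 k) : p m ≤ 1 :=
  h.sum_weight ▸ single_le_sum (fun i _ => h.weight_nonneg i) hm

lemma le_of_window_le (h : IsAveragingRecurrence k p f) {w : ℕ} {M : ℝ}
    (hwin : ∀ x, w ≤ x → x < w + k → f x ≤ M) : ∀ x, w ≤ x → f x ≤ M := by
  intro x
  induction x using Nat.strong_induction_on with
  | _ x ih =>
    intro hx
    by_cases hxk : x < w + k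
    · exact hwin x hx hxk
    obtain ⟨n, rfl⟩ : ∃ n, x = n + k := ⟨x - k, by omega⟩
    calc f (n + k) = ∑ m ∈ Icc 1 k, p m * f (n + k - m) := h.eq_sum n
      _ ≤ ∑ m ∈ Icc 1 k, p m * M := sum_le_sum fun m hm => by
          rw [mem_Icc] at hm
          exact mul_le_mul_of_nonneg_left (ih _ (by omega) (by omega)) (h.weight_nonneg m)
      _ = M := by rw [← sum_mul, h.sum_weight, one_mul]

lemma exists_forall_le (h : IsAveragingRecurrence k p f) : ∃ M, ∀ x, f x ≤ M :=
  ⟨∑ x ∈ range k, |f x|, fun x => h.le_of_window_le (w := 0)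
    (fun y _ hy => (le_abs_self _).trans
      (single_le_sum (fun i _ => abs_nonneg (f i)) (mem_range.mpr (by omega)))) x x.zero_le⟩

lemma le_sub_weight_mul (h : IsAveragingRecurrence k p f) {w : ℕ} {M : ℝ}
    (hM : ∀ x, w ≤ x → f x ≤ M) {v m : ℕ} (hv : w + k ≤ v) (hm : m ∈ Icc 1 k) :
    f (v + m) ≤ M - p m * (M - f v) := by
  have hm' := mem_Icc.mp hm
  obtain ⟨n, hn⟩ : ∃ n, v + m = n + k := ⟨v + m - k, by omega⟩
  have hsplit := add_sum_erase (Icc 1 k) p hm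
  rw [h.sum_weight] at hsplit
  calc f (v + m) = p m * f v + ∑ i ∈ (Icc 1 k).erase m, p i * f (n + k - i) := by
        rw [hn, h.eq_sum, ← add_sum_erase _ _ hm, show n + k - m = v by omega]
    _ ≤ p m * f v + ∑ i ∈ (Icc 1 k).erase m, p i * M := by
        gcongr with i hi
        · exact h.weight_nonneg i
        · have := mem_Icc.mp (mem_of_mem_erase hi)
          exact hM _ (by omega)
    _ = M - p m * (M - f v) := by rw [← sum_mul]; linear_combination M * hsplit

lemma le_sub_pow_mul_of_mem_closure (h : IsAveragingRecurrence k p f) {w : ℕ} {M : ℝ}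
    (hM : ∀ x, w ≤ x → f x ≤ M) {S : Set ℕ} {δ : ℝ} (hδ : 0 ≤ δ)
    (hS : ∀ m ∈ S, m ∈ Icc 1 k ∧ δ ≤ p m) {d : ℕ} (hd : d ∈ AddSubmonoid.closure S) :
    ∀ v, w + k ≤ v → f (v + d) ≤ M - δ ^ d * (M - f v) := by
  induction hd using AddSubmonoid.closure_induction with
  | mem m hm =>
    intro v hv
    obtain ⟨hmk, hδm⟩ := hS m hm
    have hpow : δ ^ m ≤ p m := (pow_le_of_le_one hδ (hδm.trans (h.weight_le_one hmk))
      (by have := mem_Icc.mp hmk; omega)).trans hδm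
    have hfv : 0 ≤ M - f v := sub_nonneg.mpr (hM v (by omega))
    have := h.le_sub_weight_mul hM hv hmk
    nlinarith
  | zero => intro v _; simp
  | add a b _ _ iha ihb =>
    intro v hv
    have ha : δ ^ a * (M - f v) ≤ M - f (v + a) := by linarith [iha v hv]
    have hb := ihb (v + a) (by omega)
    calc f (v + (a + b)) = f (v + a + b) := by rw [add_assoc]
      _ ≤ M - δ ^ b * (M - f (v + a)) := hb
      _ ≤ M - δ ^ b * (δ ^ a * (M - f v)) := by gcongr
      _ = M - δ ^ (a + b) * (M - f v) := by ring

lemma eventually_le_sub (h : IsAveragingRecurrence k p f) {S : Set ℕ} {δ L : ℝ} {F : ℕ}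
    (hδ0 : 0 ≤ δ) (hδ1 : δ ≤ 1) (hS : ∀ m ∈ S, m ∈ Icc 1 k ∧ δ ≤ p m)
    (hF : ∀ d, F ≤ d → d ∈ AddSubmonoid.closure S)
    (hL : ∀ u, ∃ x, u ≤ x ∧ x < u + k ∧ f x ≤ L) {M : ℝ} (hM0 : 0 ≤ M)
    (hM : ∀ᶠ x in atTop, f x ≤ M) : ∀ᶠ x in atTop, f x ≤ M - δ ^ (F + k) * -L := by
  obtain ⟨w, hw⟩ := eventually_atTop.mp hM
  obtain ⟨u, hwu, -, hfu⟩ := hL (w + k)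
  refine eventually_atTop.mpr ⟨u + F, h.le_of_window_le fun x hx hxk => ?_⟩
  obtain ⟨d, rfl⟩ : ∃ d, x = u + d := ⟨x - u, by omega⟩
  have hpow : δ ^ (F + k) ≤ δ ^ d := pow_le_pow_of_le_one hδ0 hδ1 (by omega)
  have hfu' : 0 ≤ M - f u := sub_nonneg.mpr (hw u (by omega))
  have hgap : -L ≤ M - f u := by linarith
  have := h.le_sub_pow_mul_of_mem_closure hw hδ0 hS (hF d (by omega)) u hwu
  nlinarith [mul_nonneg (sub_nonneg.mpr hpow) hfu',
    mul_nonneg (pow_nonneg hδ0 (F + k)) (sub_nonneg.mpr hgap)]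

theorem eventually_neg (h : IsAveragingRecurrence k p f)
    (hgcd : ((Icc 1 k).filter fun m => 0 < p m).gcd id = 1) {L : ℝ} (hL0 : L < 0)
    (hL : ∀ u, ∃ x, u ≤ x ∧ x < u + k ∧ f x ≤ L) : ∀ᶠ x in atTop, f x < 0 := by
  set S := (Icc 1 k).filter fun m => 0 < p m
  obtain ⟨m₀, hm₀⟩ : S.Nonempty := by
    rw [nonempty_iff_ne_empty]; rintro hS; simp [hS] at hgcd
  set δ := S.inf' ⟨m₀, hm₀⟩ p
  have hδS : ∀ m ∈ S, δ ≤ p m := fun m hm => inf'_le p hm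
  have hδ0 : 0 < δ := (lt_inf'_iff _).mpr fun m hm => (mem_filter.mp hm).2
  have hδ1 : δ ≤ 1 := (hδS m₀ hm₀).trans (h.weight_le_one (mem_filter.mp hm₀).1)
  obtain ⟨F, hF⟩ := Nat.exists_mem_closure_of_ge (S : Set ℕ)
  rw [Nat.setGcd_coe_finset, hgcd] at hF
  obtain ⟨B, hB⟩ := h.exists_forall_le
  refine eventually_neg_of_forall_eventually_le_sub (mul_pos (pow_pos hδ0 _) (neg_pos.mpr hL0))
    (fun M hM0 hM => h.eventually_le_sub hδ0.le hδ1
      (fun m hm => ⟨(mem_filter.mp hm).1, hδS m hm⟩) (fun d hd => hF d hd (one_dvd d))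
      hL hM0 hM)
    (Eventually.of_forall hB)

end IsAveragingRecurrence

lemma coeff_sum_Icc_C_mul_X_pow (k : ℕ) (f : ℕ → ℝ) (j : ℕ) :
    (∑ i ∈ Icc 1 k, C (f i) * X ^ (k - i)).coeff j = if j < k then f (k - j) else 0 := by
  simp only [finsetSum_coeff, coeff_C_mul, coeff_X_pow, mul_ite, mul_one, mul_zero]
  split_ifs with hj
  · rw [sum_eq_single_of_mem (k - j) (mem_Icc.mpr ⟨by omega, by omega⟩)
      fun i hi hne => if_neg (by have := mem_Icc.mp hi; omega), if_pos (by omega)]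
  · exact sum_eq_zero fun i hi => if_neg (by have := mem_Icc.mp hi; omega)

lemma eval_neg_of_coeff_nonpos {q : ℝ[X]} {r : ℝ} (hr : 0 < r) (hq : ∀ j, q.coeff j ≤ 0)
    (hq0 : q ≠ 0) : q.eval r < 0 := by
  rw [eval_eq_sum, Polynomial.sum_def]
  refine sum_neg (fun j hj => mul_neg_of_neg_of_pos ?_ (pow_pos hr j)) (support_nonempty.mpr hq0)
  exact (hq j).lt_of_ne (mem_support_iff.mp hj)

noncomputable def charPoly (k : ℕ) (c : ℕ → ℕ) : ℝ[X] :=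
  X ^ k - ∑ i ∈ Icc 1 k, C (c i : ℝ) * X ^ (k - i)

/-- `q.coeff (k - 1)` is the paper's `q(1, t)`. -/
noncomputable def zeroingStep (k : ℕ) (c : ℕ → ℕ) (q : ℝ[X]) : ℝ[X] :=
  X * q - C (q.coeff (k - 1)) * charPoly k c

section Zeroing

variable {k : ℕ} {c : ℕ → ℕ}

lemma coeff_charPoly (j : ℕ) :
    (charPoly k c).coeff j = (if j = k then 1 else 0) - if j < k then (c (k - j) : ℝ) else 0 := by
  rw [charPoly, coeff_sub, coeff_X_pow, coeff_sum_Icc_C_mul_X_pow]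

lemma sum_div_pow_eq_one {r : ℝ} (hr : 0 < r) (hroot : (charPoly k c).IsRoot r) :
    ∑ m ∈ Icc 1 k, (c m : ℝ) / r ^ m = 1 := by
  have hrk : ∑ m ∈ Icc 1 k, (c m : ℝ) * r ^ (k - m) = r ^ k := by
    have h0 := hroot.eq_zero
    simp only [charPoly, eval_sub, eval_pow, eval_X, eval_finsetSum, eval_mul, eval_C] at h0
    linarith
  calc ∑ m ∈ Icc 1 k, (c m : ℝ) / r ^ m
        = (∑ m ∈ Icc 1 k, (c m : ℝ) * r ^ (k - m)) / r ^ k := by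
        rw [sum_div]
        refine sum_congr rfl fun m hm => ?_
        rw [div_eq_div_iff (pow_pos hr m).ne' (pow_pos hr k).ne', mul_assoc, ← pow_add,
          Nat.sub_add_cancel (mem_Icc.mp hm).2]
    _ = 1 := by rw [hrk, div_self (pow_pos hr k).ne']

lemma coeff_zeroingStep_zero (hk : 1 ≤ k) (q : ℝ[X]) :
    (zeroingStep k c q).coeff 0 = c k * q.coeff (k - 1) := by
  rw [zeroingStep, coeff_sub, mul_coeff_zero, coeff_C_mul, coeff_charPoly,
    if_neg (by omega : 0 ≠ k), if_pos (by omega : 0 < k)]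
  simp only [coeff_X_zero, Nat.sub_zero]
  ring

lemma coeff_zeroingStep_succ (q : ℝ[X]) (j : ℕ) :
    (zeroingStep k c q).coeff (j + 1)
      = q.coeff j - q.coeff (k - 1) * (charPoly k c).coeff (j + 1) := by
  rw [zeroingStep, coeff_sub, coeff_X_mul, coeff_C_mul]

lemma degree_zeroingStep_lt (hk : 1 ≤ k) {q : ℝ[X]} (hq : q.degree < k) :
    (zeroingStep k c q).degree < k := by
  rw [degree_lt_iff_coeff_zero] at hq ⊢
  intro m hm
  obtain ⟨j, rfl⟩ : ∃ j, m = j + 1 := ⟨m - 1, by omega⟩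
  rw [coeff_zeroingStep_succ, coeff_charPoly]
  rcases (Nat.lt_or_ge j k) with hj | hj
  · obtain rfl : k = j + 1 := by omega
    simp
  · simp [hq j hj, show j + 1 ≠ k by omega, show ¬ j + 1 < k by omega]

lemma eval_zeroingStep {r : ℝ} (hroot : (charPoly k c).IsRoot r) (q : ℝ[X]) :
    (zeroingStep k c q).eval r = r * q.eval r := by
  simp [zeroingStep, hroot.eq_zero]

lemma eq_zero_of_zeroingStep_eq_zero (hk : 1 ≤ k) (hc : 0 < c k) {q : ℝ[X]}
    (h : zeroingStep k c q = 0) : q = 0 := by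
  have hlead : q.coeff (k - 1) = 0 := by
    have := congrArg (coeff · 0) h
    simp only [coeff_zeroingStep_zero hk, coeff_zero, mul_eq_zero, Nat.cast_eq_zero] at this
    exact this.resolve_left hc.ne'
  simpa [zeroingStep, hlead, X_ne_zero] using h

variable {Q : ℕ → ℝ[X]}

lemma degree_zeroing_lt (hk : 1 ≤ k) (hQ : ∀ t, Q (t + 1) = zeroingStep k c (Q t))
    (h0 : (Q 0).degree < k) (t : ℕ) : (Q t).degree < k := by
  induction t with
  | zero => exact h0
  | succ t ih => exact hQ t ▸ degree_zeroingStep_lt hk ih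

lemma eval_zeroing {r : ℝ} (hroot : (charPoly k c).IsRoot r)
    (hQ : ∀ t, Q (t + 1) = zeroingStep k c (Q t)) (t : ℕ) :
    (Q t).eval r = r ^ t * (Q 0).eval r := by
  induction t with
  | zero => simp
  | succ t ih => rw [hQ, eval_zeroingStep hroot, ih, pow_succ]; ring

lemma zeroing_ne_zero (hk : 1 ≤ k) (hc : 0 < c k) (hQ : ∀ t, Q (t + 1) = zeroingStep k c (Q t))
    (h0 : Q 0 ≠ 0) (t : ℕ) : Q t ≠ 0 := by
  induction t with
  | zero => exact h0
  | succ t ih => exact fun h => ih (eq_zero_of_zeroingStep_eq_zero hk hc (hQ t ▸ h))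

lemma coeff_zeroing_eq_sum (hk : 1 ≤ k) (hQ : ∀ t, Q (t + 1) = zeroingStep k c (Q t))
    {j : ℕ} (hj : j < k) (v : ℕ) :
    (Q (v + j + 1)).coeff j
      = ∑ i ∈ range (j + 1), (c (k - j + i) : ℝ) * (Q (v + j - i)).coeff (k - 1) := by
  induction j with
  | zero => simp [hQ, coeff_zeroingStep_zero hk]
  | succ j ih =>
    rw [show v + (j + 1) + 1 = v + j + 1 + 1 by omega, hQ, coeff_zeroingStep_succ,
      ih (by omega), coeff_charPoly, if_neg (by omega), if_pos hj,
      sum_range_succ' (fun i => (c (k - (j + 1) + i) : ℝ) * (Q (v + (j + 1) - i)).coeff (k - 1))]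
    have hterm : ∀ i ∈ range (j + 1),
        (c (k - (j + 1) + (i + 1)) : ℝ) * (Q (v + (j + 1) - (i + 1))).coeff (k - 1)
          = (c (k - j + i) : ℝ) * (Q (v + j - i)).coeff (k - 1) := fun i _ => by
      rw [show k - (j + 1) + (i + 1) = k - j + i by omega,
        show v + (j + 1) - (i + 1) = v + j - i by omega]
    rw [sum_congr rfl hterm, add_zero, Nat.sub_zero, show v + (j + 1) = v + j + 1 by omega]
    ring

lemma isAveragingRecurrence_zeroing (hk : 1 ≤ k) (hQ : ∀ t, Q (t + 1) = zeroingStep k c (Q t))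
    {r : ℝ} (hr : 0 < r) (hroot : (charPoly k c).IsRoot r) :
    IsAveragingRecurrence k (fun m => c m / r ^ m) (fun t => (Q t).coeff (k - 1) / r ^ t) where
  weight_nonneg m := by positivity
  sum_weight := sum_div_pow_eq_one hr hroot
  eq_sum n := by
    have h := coeff_zeroing_eq_sum hk hQ (j := k - 1) (by omega) n
    rw [show n + (k - 1) + 1 = n + k by omega] at h
    have hreindex (g : ℕ → ℝ) : ∑ m ∈ Icc 1 k, g m = ∑ i ∈ range k, g (i + 1) := by
      rw [range_eq_Ico, sum_Ico_add', zero_add, Ico_add_one_right_eq_Icc]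
    rw [h, sum_div, hreindex, show k - 1 + 1 = k by omega]
    refine sum_congr rfl fun i hi => ?_
    have hpow : r ^ (n + k) = r ^ (i + 1) * r ^ (n + k - (i + 1)) := by
      rw [← pow_add]; congr 1; have := mem_range.mp hi; omega
    rw [show k - (k - 1) + i = i + 1 by omega, show n + (k - 1) - i = n + k - (i + 1) by omega,
      hpow]
    field_simp

lemma eval_eq_window_sum (hk : 1 ≤ k) (hQ : ∀ t, Q (t + 1) = zeroingStep k c (Q t))
    (h0 : (Q 0).degree < k) {r : ℝ} (hr : 0 < r) (hroot : (charPoly k c).IsRoot r) (u : ℕ) :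
    (Q 0).eval r = ∑ j ∈ range k, ∑ i ∈ range (j + 1),
      c (k - j + i) * r ^ j / r ^ (i + 1)
        * ((Q (u + k - 1 - i)).coeff (k - 1) / r ^ (u + k - 1 - i)) := by
  have hnat : (Q (u + k)).natDegree < k := by
    by_cases hq : Q (u + k) = 0
    · simp [hq]; omega
    · exact (natDegree_lt_iff_degree_lt hq).mpr (degree_zeroing_lt hk hQ h0 _)
  apply mul_left_cancel₀ (pow_pos hr (u + k)).ne'
  rw [← eval_zeroing hroot hQ, eval_eq_sum_range' hnat, mul_sum]
  refine sum_congr rfl fun j hj => ?_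
  have hjk := mem_range.mp hj
  have hcoeff := coeff_zeroing_eq_sum hk hQ hjk (u + k - 1 - j)
  rw [show u + k - 1 - j + j + 1 = u + k by omega] at hcoeff
  rw [hcoeff, sum_mul, mul_sum]
  refine sum_congr rfl fun i hi => ?_
  have hij := mem_range.mp hi
  have hpow : r ^ (u + k) = r ^ (i + 1) * r ^ (u + k - 1 - i) := by
    rw [← pow_add]; congr 1; omega
  rw [show u + k - 1 - j + j - i = u + k - 1 - i by omega, hpow]
  field_simp

lemma exists_neg_window_bound (hk : 1 ≤ k) (hc : 0 < c k)
    (hQ : ∀ t, Q (t + 1) = zeroingStep k c (Q t)) (h0 : (Q 0).degree < k) {r : ℝ} (hr : 0 < r)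
    (hroot : (charPoly k c).IsRoot r) (hneg : (Q 0).eval r < 0) :
    ∃ L < 0, ∀ u, ∃ x, u ≤ x ∧ x < u + k ∧ (Q x).coeff (k - 1) / r ^ x ≤ L := by
  set σ : ℕ → ℝ := fun t => (Q t).coeff (k - 1) / r ^ t
  set w : ℕ → ℕ → ℝ := fun j i => c (k - j + i) * r ^ j / r ^ (i + 1)
  have hw : ∀ j i, 0 ≤ w j i := fun j i => by positivity
  have hW : 0 < ∑ j ∈ range k, ∑ i ∈ range (j + 1), w j i := by
    refine sum_pos' (fun j _ => sum_nonneg fun i _ => hw j i)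
      ⟨k - 1, mem_range.mpr (by omega), ?_⟩
    refine sum_pos' (fun i _ => hw _ i) ⟨k - 1, mem_range.mpr (by omega), ?_⟩
    simp only [w, show k - (k - 1) + (k - 1) = k by omega]
    positivity
  refine ⟨(Q 0).eval r / _, div_neg_of_neg_of_pos hneg hW, fun u => ?_⟩
  obtain ⟨x, hx, hmin⟩ := (Ico u (u + k)).exists_min_image σ (nonempty_Ico.mpr (by omega))
  refine ⟨x, (mem_Ico.mp hx).1, (mem_Ico.mp hx).2, ?_⟩
  rw [le_div_iff₀ hW, eval_eq_window_sum hk hQ h0 hr hroot u, mul_sum]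
  refine sum_le_sum fun j hj => ?_
  rw [mul_sum]
  refine sum_le_sum fun i hi => ?_
  rw [mul_comm]
  have hjk := mem_range.mp hj
  have hij := mem_range.mp hi
  exact mul_le_mul_of_nonneg_left (hmin _ (mem_Ico.mpr ⟨by omega, by omega⟩)) (hw j i)

lemma coeff_zeroing_nonpos (hk : 1 ≤ k) (hQ : ∀ t, Q (t + 1) = zeroingStep k c (Q t))
    (h0 : (Q 0).degree < k) {n : ℕ} (hs : ∀ x, n ≤ x → (Q x).coeff (k - 1) ≤ 0) (j : ℕ) :
    (Q (n + k)).coeff j ≤ 0 := by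
  rcases lt_or_ge j k with hj | hj
  · have hcoeff := coeff_zeroing_eq_sum hk hQ hj (n + k - 1 - j)
    rw [show n + k - 1 - j + j + 1 = n + k by omega] at hcoeff
    rw [hcoeff]
    exact sum_nonpos fun i hi => mul_nonpos_of_nonneg_of_nonpos (Nat.cast_nonneg _)
      (hs _ (by have := mem_range.mp hi; omega))
  · exact ((degree_lt_iff_coeff_zero _ _).mp (degree_zeroing_lt hk hQ h0 _) j hj).le

end Zeroing

/-- The Zeroing Algorithm terminates (there exists `t` such that every coefficient of
`Q_t` is `≤ 0`) if and only if `Q_0(r) < 0`. -/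
theorem zeroing_algorithm_termination
    (k : ℕ) (hk : 1 ≤ k) (c : ℕ → ℕ) (hck : 0 < c k)
    (hgcd : Finset.gcd ((Finset.Icc 1 k).filter fun m => c m ≠ 0) id = 1)
    (P : Polynomial ℝ)
    (hP : P = X ^ k - ∑ i ∈ Finset.Icc 1 k, C (c i : ℝ) * X ^ (k - i))
    (r : ℝ) (hr : 0 < r) (hroot : P.IsRoot r)
    (β : ℕ → ℝ) (hβ : ∃ n ∈ Finset.Icc 1 k, β n ≠ 0)
    (Q : ℕ → Polynomial ℝ)
    (hQ0 : Q 0 = ∑ n ∈ Finset.Icc 1 k, C (β n) * X ^ (k - n))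
    (hQt : ∀ t, 1 ≤ t → Q t = X * Q (t - 1) - C ((Q (t - 1)).coeff (k - 1)) * P) :
    (∃ t : ℕ, ∀ j : ℕ, (Q t).coeff j ≤ 0) ↔ (Q 0).eval r < 0 := by
  have hQ : ∀ t, Q (t + 1) = zeroingStep k c (Q t) := fun t => by
    rw [hQt (t + 1) (by omega), Nat.add_sub_cancel, hP]; rfl
  have hroot' : (charPoly k c).IsRoot r := by rw [charPoly, ← hP]; exact hroot
  have h0 : (Q 0).degree < k := (degree_lt_iff_coeff_zero _ _).mpr fun j hj => by
    rw [hQ0, coeff_sum_Icc_C_mul_X_pow, if_neg (by omega)]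
  have h0ne : Q 0 ≠ 0 := by
    obtain ⟨n, hn, hβn⟩ := hβ
    have hnk := mem_Icc.mp hn
    intro hQ00
    have := coeff_sum_Icc_C_mul_X_pow k β (k - n)
    rw [← hQ0, hQ00, coeff_zero, if_pos (by omega), Nat.sub_sub_self hnk.2] at this
    exact hβn this.symm
  constructor
  · rintro ⟨t, ht⟩
    have := eval_neg_of_coeff_nonpos hr ht (zeroing_ne_zero hk hck hQ h0ne t)
    rw [eval_zeroing hroot' hQ] at this
    exact neg_of_mul_neg_right this (pow_pos hr t).le
  · intro hneg
    have hsupp : ((Icc 1 k).filter fun m => 0 < (c m : ℝ) / r ^ m)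
        = (Icc 1 k).filter fun m => c m ≠ 0 :=
      filter_congr fun m _ => by simp [hr, pos_iff_ne_zero]
    obtain ⟨L, hL0, hL⟩ := exists_neg_window_bound hk hck hQ h0 hr hroot' hneg
    obtain ⟨t, ht⟩ := eventually_atTop.mp
      ((isAveragingRecurrence_zeroing hk hQ hr hroot').eventually_neg (hsupp ▸ hgcd) hL0 hL)
    exact ⟨t + k, coeff_zeroing_nonpos hk hQ h0 fun x hx => by
      simpa using ((div_lt_iff₀ (pow_pos hr x)).mp (ht x hx)).le⟩
end

section
/- Let γ_1 = 1 and let γ_2, …, γ_m be integers, and set Γ_m(x) = γ_1 x^{m−1} + γ_2 x^{m−2} + ⋯ + γ_m. If Γ_m(r) > 0, then there exists a monic polynomial p(x) with integer coefficients, divisible by P(x), of some degree N ≥ m − 1, such that the coefficient of x^{N−i+1} in p equals γ_i for 1 ≤ i ≤ m and the coefficient of x^j in p is ≤ 0 for every j ≤ N − m. -/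
/-!
Let `R_T` be the remainder of `X ^ T * Γ_m` modulo `P`. Once `T ≥ k`, the polynomial
`X ^ T * Γ_m - R_T` is monic, divisible by `P`, starts with `γ_1, …, γ_m`, and its coefficients
below `X ^ T` are those of `-R_T`; so it suffices to find `T` for which `R_T` has nonnegative
coefficients.

Factor `P = (X - r) Q`. Each coefficient sequence `T ↦ (R_T)_j` solves the linear recurrence with
characteristic polynomial `P`, and `Q` applied to it as a difference operator gives
`Γ_m(r) Q_j r ^ T`. The gcd condition makes every root of `Q` smaller than `r` in modulus, so
`(R_T)_j / r ^ T → Γ_m(r) Q_j / Q(r)`. Since the non-leading coefficients of `P` are `≤ 0` and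
`P(0) < 0`, the coefficients of `Q = P / (X - r)` are positive, hence so is the limit.
-/

open Polynomial Filter Topology

def seqShift (R : Type*) [Semiring R] : Module.End R (ℕ → R) :=
  LinearMap.funLeft R R (· + 1)

section Shift

variable {R : Type*}

theorem seqShift_pow_apply [Semiring R] (n : ℕ) (s : ℕ → R) (T : ℕ) :
    (seqShift R ^ n) s T = s (T + n) := by
  induction n generalizing T with
  | zero => rfl
  | succ n ih =>
    rw [pow_succ', Module.End.mul_apply]
    exact (ih (T + 1)).trans (by rw [add_right_comm, add_assoc])

theorem aeval_seqShift_monomial_apply [CommSemiring R] (n : ℕ) (a : R) (s : ℕ → R) (T : ℕ) :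
    aeval (seqShift R) (monomial n a) s T = a * s (T + n) := by
  rw [aeval_monomial, Module.End.mul_apply, Module.algebraMap_end_apply, Pi.smul_apply,
    seqShift_pow_apply, smul_eq_mul]

theorem aeval_seqShift_X_sub_C_apply [CommRing R] (z : R) (s : ℕ → R) (T : ℕ) :
    aeval (seqShift R) (X - C z) s T = s (T + 1) - z * s T := by
  rw [← monomial_one_one_eq_X, ← monomial_zero_left, map_sub, LinearMap.sub_apply,
    Pi.sub_apply, aeval_seqShift_monomial_apply, aeval_seqShift_monomial_apply]
  simp

theorem aeval_seqShift_coeff_modByMonic [CommRing R] (P A F : R[X]) (j : ℕ) :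
    aeval (seqShift R) A (fun T => ((X ^ T * F) %ₘ P).coeff j) =
      fun T => ((X ^ T * (A * F)) %ₘ P).coeff j := by
  induction A using Polynomial.induction_on' with
  | add A B hA hB =>
    funext T
    rw [map_add, LinearMap.add_apply, Pi.add_apply, hA, hB, add_mul, mul_add, add_modByMonic,
      coeff_add]
  | monomial n a =>
    funext T
    rw [aeval_seqShift_monomial_apply, ← C_mul_X_pow_eq_monomial,
      show X ^ T * (C a * X ^ n * F) = a • (X ^ (T + n) * F) by rw [smul_eq_C_mul]; ring,
      smul_modByMonic, coeff_smul, smul_eq_mul]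

end Shift

theorem tendsto_zero_of_le_mul_add {a : ℝ} (ha₀ : 0 ≤ a) (ha₁ : a < 1) {y e : ℕ → ℝ}
    (hy₀ : ∀ T, 0 ≤ y T) (he : Tendsto e atTop (𝓝 0)) (hy : ∀ T, y (T + 1) ≤ a * y T + e T) :
    Tendsto y atTop (𝓝 0) := by
  refine tendsto_order.2 ⟨fun b hb => Eventually.of_forall fun T => hb.trans_le (hy₀ T),
    fun ε hε => ?_⟩
  obtain ⟨T₀, hT₀⟩ := eventually_atTop.1 (he.eventually (eventually_le_nhds
    (show (0 : ℝ) < (1 - a) * (ε / 2) by nlinarith)))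
  -- past `T₀` the excess of `y` over `ε / 2` contracts by the factor `a` at each step
  have hcontract : ∀ n, y (T₀ + n) - ε / 2 ≤ a ^ n * (y T₀ - ε / 2) := by
    intro n
    induction n with
    | zero => simp
    | succ n ih =>
      rw [pow_succ', mul_assoc, ← add_assoc]
      nlinarith [hy (T₀ + n), hT₀ (T₀ + n) (Nat.le_add_right _ _),
        mul_le_mul_of_nonneg_left ih ha₀]
  have hsmall : ∀ᶠ n in atTop, a ^ n * (y T₀ - ε / 2) < ε / 2 :=
    ((tendsto_pow_atTop_nhds_zero_of_lt_one ha₀ ha₁).mul_const _).eventually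
      (eventually_lt_nhds (by simpa using half_pos hε))
  obtain ⟨n₀, hn₀⟩ := eventually_atTop.1 hsmall
  refine eventually_atTop.2 ⟨T₀ + n₀, fun T hT => ?_⟩
  obtain ⟨n, rfl⟩ := Nat.exists_eq_add_of_le (le_of_add_le_left hT)
  linarith [hcontract n, hn₀ n (by omega)]

theorem tendsto_of_eq_mul_add {q : ℂ} (hq : ‖q‖ < 1) {x h : ℕ → ℂ} {L : ℂ}
    (hh : Tendsto h atTop (𝓝 L)) (hx : ∀ T, x (T + 1) = q * x T + h T) :
    Tendsto x atTop (𝓝 (L / (1 - q))) := by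
  have hq₁ : 1 - q ≠ 0 := by
    rintro h
    rw [← sub_eq_zero.1 h, norm_one] at hq
    exact lt_irrefl _ hq
  rw [tendsto_iff_norm_sub_tendsto_zero]
  refine tendsto_zero_of_le_mul_add (norm_nonneg q) hq (fun _ => norm_nonneg _)
    (tendsto_iff_norm_sub_tendsto_zero.1 hh) fun T => ?_
  calc ‖x (T + 1) - L / (1 - q)‖ = ‖q * (x T - L / (1 - q)) + (h T - L)‖ := by
        rw [hx]; congr 1; field_simp; ring
    _ ≤ ‖q‖ * ‖x T - L / (1 - q)‖ + ‖h T - L‖ := (norm_add_le _ _).trans_eq (by rw [norm_mul])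

theorem tendsto_div_pow_of_sub_mul {r : ℝ} (hr : 0 < r) {z : ℂ} (hz : ‖z‖ < r) {u : ℕ → ℂ}
    {c : ℂ} (h : Tendsto (fun T => (u (T + 1) - z * u T) / (r : ℂ) ^ T) atTop (𝓝 c)) :
    Tendsto (fun T => u T / (r : ℂ) ^ T) atTop (𝓝 (c / (r - z))) := by
  have hr₀ : (r : ℂ) ≠ 0 := Complex.ofReal_ne_zero.2 hr.ne'
  have hrz : (r : ℂ) - z ≠ 0 := by
    rintro h
    rw [← sub_eq_zero.1 h, Complex.norm_real, Real.norm_of_nonneg hr.le] at hz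
    exact lt_irrefl _ hz
  have hq : ‖z / r‖ < 1 := by
    rwa [norm_div, Complex.norm_real, Real.norm_of_nonneg hr.le, div_lt_one hr]
  convert tendsto_of_eq_mul_add hq (h.div_const r) fun T => ?_ using 2
  · field_simp
  · rw [pow_succ]; field_simp; ring

theorem tendsto_div_pow_of_aeval_multiset_prod {r : ℝ} (hr : 0 < r) (M : Multiset ℂ)
    (hM : ∀ z ∈ M, ‖z‖ < r) {s : ℕ → ℂ} {c : ℂ}
    (h : Tendsto (fun T => aeval (seqShift ℂ) (M.map (X - C ·)).prod s T / (r : ℂ) ^ T)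
      atTop (𝓝 c)) :
    Tendsto (fun T => s T / (r : ℂ) ^ T) atTop
      (𝓝 (c / (M.map (X - C ·)).prod.eval (r : ℂ))) := by
  induction M using Multiset.induction_on generalizing c with
  | empty => simpa using h
  | cons z M ih =>
    simp only [Multiset.map_cons, Multiset.prod_cons, map_mul, Module.End.mul_apply,
      aeval_seqShift_X_sub_C_apply] at h
    have := ih (fun w hw => hM w (Multiset.mem_cons_of_mem hw))
      (tendsto_div_pow_of_sub_mul hr (hM z (Multiset.mem_cons_self z M)) h)
    simpa [div_div] using this

theorem tendsto_div_pow_of_aeval {r : ℝ} (hr : 0 < r) {Q : ℂ[X]} (hQ : Q.Monic)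
    (hroots : ∀ z ∈ Q.roots, ‖z‖ < r) {s : ℕ → ℂ} {c : ℂ}
    (h : Tendsto (fun T => aeval (seqShift ℂ) Q s T / (r : ℂ) ^ T) atTop (𝓝 c)) :
    Tendsto (fun T => s T / (r : ℂ) ^ T) atTop (𝓝 (c / Q.eval (r : ℂ))) := by
  rw [(IsAlgClosed.splits Q).eq_prod_roots_of_monic hQ] at h ⊢
  exact tendsto_div_pow_of_aeval_multiset_prod hr _ hroots h

theorem mul_modByMonic_X_sub_C_mul {R : Type*} [CommRing R] [Nontrivial R] (A : R[X])
    {Q : R[X]} (hQ : Q.Monic) (a : R) :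
    (A * Q) %ₘ ((X - C a) * Q) = C (A.eval a) * Q := by
  have hPQ : ((X - C a) * Q).Monic := (monic_X_sub_C a).mul hQ
  rw [modByMonic_eq_of_dvd_sub hPQ (p₂ := C (A.eval a) * Q)
    (by rw [← sub_mul]; exact mul_dvd_mul_right X_sub_C_dvd_sub_C_eval Q),
    modByMonic_eq_self_iff hPQ]
  refine degree_lt_degree ((natDegree_C_mul_le _ _).trans_lt ?_)
  rw [(monic_X_sub_C a).natDegree_mul hQ, natDegree_X_sub_C]
  omega

theorem Complex.tendsto_coeff_modByMonic_div_pow {r : ℝ} (hr : 0 < r) {Q : ℂ[X]} (hQ : Q.Monic)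
    (hroots : ∀ z ∈ Q.roots, ‖z‖ < r) (F : ℂ[X]) (j : ℕ) :
    Tendsto (fun T => ((X ^ T * F) %ₘ ((X - C (r : ℂ)) * Q)).coeff j / (r : ℂ) ^ T) atTop
      (𝓝 (F.eval (r : ℂ) * Q.coeff j / Q.eval (r : ℂ))) := by
  refine tendsto_div_pow_of_aeval hr hQ hroots ?_
  have hr₀ : (r : ℂ) ≠ 0 := Complex.ofReal_ne_zero.2 hr.ne'
  have hconst : ∀ T, ((X ^ T * (Q * F)) %ₘ ((X - C (r : ℂ)) * Q)).coeff j / (r : ℂ) ^ T =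
      F.eval (r : ℂ) * Q.coeff j := fun T => by
    rw [show X ^ T * (Q * F) = X ^ T * F * Q by ring, mul_modByMonic_X_sub_C_mul _ hQ,
      coeff_C_mul, eval_mul, eval_pow, eval_X]
    field_simp
  simp only [aeval_seqShift_coeff_modByMonic, hconst, tendsto_const_nhds]

theorem coeff_divByMonic_X_sub_C_pos {P : ℝ[X]} {r : ℝ} (hr : 0 < r) (hroot : P.IsRoot r)
    (hcoeff : ∀ i < P.natDegree, P.coeff i ≤ 0) (hcoeff₀ : P.coeff 0 < 0) {j : ℕ}
    (hj : j < P.natDegree) : 0 < (P /ₘ (X - C r)).coeff j := by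
  rw [coeff_divByMonic_X_sub_C]
  refine pos_of_mul_pos_right ?_ (pow_pos hr (j + 1)).le
  -- `P(r) = 0` turns the top part of `∑ P.coeff i * r ^ i` into minus the bottom part, which is
  -- at least `-P.coeff 0`
  have hsplit := Finset.sum_range_add_sum_Ico (fun i => P.coeff i * r ^ i)
    (show j + 1 ≤ P.natDegree + 1 by omega)
  rw [Finset.Ico_add_one_right_eq_Icc, ← eval_eq_sum_range, hroot.eq_zero,
    Finset.sum_range_succ'] at hsplit
  have hbottom : ∑ i ∈ Finset.range j, P.coeff (i + 1) * r ^ (i + 1) ≤ 0 :=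
    Finset.sum_nonpos fun i hi =>
      mul_nonpos_of_nonpos_of_nonneg (hcoeff _ (by simp at hi; omega)) (pow_pos hr _).le
  have htop : r ^ (j + 1) * ∑ i ∈ Finset.Icc (j + 1) P.natDegree, r ^ (i - (j + 1)) * P.coeff i =
      ∑ i ∈ Finset.Icc (j + 1) P.natDegree, P.coeff i * r ^ i := by
    rw [Finset.mul_sum]
    refine Finset.sum_congr rfl fun i hi => ?_
    rw [← mul_assoc, ← pow_add, Nat.add_sub_of_le (Finset.mem_Icc.1 hi).1, mul_comm]
  rw [htop]
  simp only [pow_zero, mul_one] at hsplit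
  linarith

theorem eval_map_ofReal (p : ℝ[X]) (x : ℝ) : (p.map (algebraMap ℝ ℂ)).eval (x : ℂ) = p.eval x := by
  rw [eval_map_algebraMap]
  exact (Polynomial.ofReal_eval p x).symm

theorem Real.tendsto_coeff_modByMonic_div_pow {r : ℝ} (hr : 0 < r) {Q : ℝ[X]} (hQ : Q.Monic)
    (hroots : ∀ z ∈ (Q.map (algebraMap ℝ ℂ)).roots, ‖z‖ < r) (F : ℝ[X]) (j : ℕ) :
    Tendsto (fun T => ((X ^ T * F) %ₘ ((X - C r) * Q)).coeff j / r ^ T) atTop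
      (𝓝 (F.eval r * Q.coeff j / Q.eval r)) := by
  have h := Complex.tendsto_coeff_modByMonic_div_pow hr (hQ.map _) hroots (F.map (algebraMap ℝ ℂ)) j
  refine Filter.tendsto_ofReal_iff.1 ?_
  convert h using 2 with T
  · rw [show X - C (r : ℂ) = (X - C r).map (algebraMap ℝ ℂ) by simp, ← Polynomial.map_mul,
      ← map_X (algebraMap ℝ ℂ), ← Polynomial.map_pow, ← Polynomial.map_mul,
      ← map_modByMonic _ ((monic_X_sub_C r).mul hQ), coeff_map]
    push_cast; rfl
  · rw [eval_map_ofReal, eval_map_ofReal, coeff_map]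
    push_cast; rfl

theorem eventually_coeff_modByMonic_nonneg {P : ℝ[X]} (hP : P.Monic) {r : ℝ} (hr : 0 < r)
    (hroot : P.IsRoot r) (hcoeff : ∀ i < P.natDegree, P.coeff i ≤ 0) (hcoeff₀ : P.coeff 0 < 0)
    (hdom : ∀ z : ℂ, (P.map (algebraMap ℝ ℂ)).IsRoot z → z ≠ r → ‖z‖ < r) {F : ℝ[X]}
    (hF : 0 < F.eval r) :
    ∀ᶠ T in atTop, ∀ j, 0 ≤ ((X ^ T * F) %ₘ P).coeff j := by
  set Q := P /ₘ (X - C r)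
  have hPQ : (X - C r) * Q = P := mul_divByMonic_eq_iff_isRoot.2 hroot
  have hQ : Q.Monic := (monic_X_sub_C r).of_mul_monic_left (hPQ ▸ hP)
  have hdeg : P.natDegree = 1 + Q.natDegree := by
    rw [← hPQ, (monic_X_sub_C r).natDegree_mul hQ, natDegree_X_sub_C]
  have hQcoeff : ∀ j < Q.natDegree + 1, 0 < Q.coeff j := fun j hj =>
    coeff_divByMonic_X_sub_C_pos hr hroot hcoeff hcoeff₀ (by omega)
  have hQr : 0 < Q.eval r := by
    rw [eval_eq_sum_range]
    exact Finset.sum_pos (fun j hj => mul_pos (hQcoeff j (Finset.mem_range.1 hj)) (pow_pos hr j))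
      Finset.nonempty_range_add_one
  have hroots : ∀ z ∈ (Q.map (algebraMap ℝ ℂ)).roots, ‖z‖ < r := by
    intro z hz
    have hzQ := isRoot_of_mem_roots hz
    refine hdom z (by rw [← hPQ, Polynomial.map_mul, IsRoot, eval_mul, hzQ.eq_zero, mul_zero]) ?_
    rintro rfl
    rw [IsRoot, eval_map_ofReal, Complex.ofReal_eq_zero] at hzQ
    exact hQr.ne' hzQ
  have hpos : ∀ᶠ T in atTop, ∀ j ∈ Finset.range P.natDegree, 0 < ((X ^ T * F) %ₘ P).coeff j := by
    refine (Finset.eventually_all _).2 fun j hj => ?_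
    have hlim := hPQ ▸ Real.tendsto_coeff_modByMonic_div_pow hr hQ hroots F j
    have hlim_pos : 0 < F.eval r * Q.coeff j / Q.eval r :=
      div_pos (mul_pos hF (hQcoeff j (by simp at hj; omega))) hQr
    filter_upwards [hlim.eventually (eventually_gt_nhds hlim_pos)] with T hT
    exact (div_pos_iff_of_pos_right (pow_pos hr T)).1 hT
  filter_upwards [hpos] with T hT j
  rcases lt_or_ge j P.natDegree with hj | hj
  · exact (hT j (Finset.mem_range.2 hj)).le
  · exact (coeff_eq_zero_of_degree_lt
      ((degree_modByMonic_lt _ hP).trans_le (degree_le_of_natDegree_le hj))).ge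

theorem eq_of_norm_le_of_sum_mul_pow_eq {S : Finset ℕ} {a : ℕ → ℝ} (ha : ∀ i ∈ S, 0 ≤ a i)
    (hgcd : (S.filter fun i => a i ≠ 0).gcd id = 1) {s : ℝ} (hs : 0 < s) {w : ℂ} (hw : ‖w‖ ≤ s)
    (h : ∑ i ∈ S, (a i : ℂ) * w ^ i = ∑ i ∈ S, (a i : ℂ) * (s : ℂ) ^ i) : w = s := by
  have hnorm : ∀ i, ‖w ^ i‖ ≤ s ^ i := fun i => by
    rw [norm_pow]; exact pow_le_pow_left₀ (norm_nonneg w) hw i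
  have hre : ∀ i, (w ^ i).re ≤ s ^ i := fun i => (Complex.re_le_norm _).trans (hnorm i)
  -- comparing real parts forces `w ^ i = s ^ i` on the support of `a`, so `w / s` is a root of
  -- unity whose order divides the gcd
  have hsum : ∑ i ∈ S, a i * (s ^ i - (w ^ i).re) = 0 := by
    have := congrArg Complex.re h
    simp only [Complex.re_sum, Complex.re_ofReal_mul, ← Complex.ofReal_pow,
      Complex.ofReal_re] at this
    simp only [mul_sub, Finset.sum_sub_distrib, this, sub_self]
  have hpow : ∀ i ∈ S.filter fun i => a i ≠ 0, (w / s) ^ i = 1 := by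
    intro i hi
    obtain ⟨hiS, hai⟩ := Finset.mem_filter.1 hi
    have hrei : (w ^ i).re = s ^ i := by
      have hterm := (Finset.sum_eq_zero_iff_of_nonneg fun i hi =>
        mul_nonneg (ha i hi) (sub_nonneg.2 (hre i))).1 hsum i hiS
      linarith [(mul_eq_zero.1 hterm).resolve_left hai]
    have him : (w ^ i).im = 0 := Complex.abs_re_eq_norm.1 (le_antisymm
      (Complex.abs_re_le_norm _) (by rw [hrei, abs_of_pos (pow_pos hs i)]; exact hnorm i))
    have hwi : w ^ i = (s : ℂ) ^ i := by
      rw [← Complex.ofReal_pow]; exact Complex.ext hrei him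
    rw [div_pow, hwi, div_self (pow_ne_zero _ (Complex.ofReal_ne_zero.2 hs.ne'))]
  have horder : orderOf (w / s) = 1 :=
    Nat.dvd_one.1 (hgcd ▸ Finset.dvd_gcd fun i hi => orderOf_dvd_of_pow_eq_one (hpow i hi))
  rw [orderOf_eq_one_iff, div_eq_one_iff_eq (Complex.ofReal_ne_zero.2 hs.ne')] at horder
  exact horder

section RecurrencePoly

variable {R : Type*} [CommRing R] (k : ℕ) (c : ℕ → ℕ)

noncomputable def recurrencePoly : R[X] := X ^ k - ∑ i ∈ Finset.Icc 1 k, C (c i : R) * X ^ (k - i)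

theorem degree_sum_C_mul_X_pow_sub_lt [Nontrivial R] :
    (∑ i ∈ Finset.Icc 1 k, C (c i : R) * X ^ (k - i)).degree < (k : WithBot ℕ) := by
  refine (degree_sum_le _ _).trans_lt ((Finset.sup_lt_iff (WithBot.bot_lt_coe k)).2 fun i hi => ?_)
  refine (degree_C_mul_X_pow_le _ _).trans_lt ?_
  exact WithBot.coe_lt_coe.2 (Nat.sub_lt_self (Finset.mem_Icc.1 hi).1 (Finset.mem_Icc.1 hi).2)

theorem recurrencePoly_monic [Nontrivial R] : (recurrencePoly k c : R[X]).Monic :=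
  monic_X_pow_sub (degree_sum_C_mul_X_pow_sub_lt k c)

theorem natDegree_recurrencePoly [Nontrivial R] : (recurrencePoly k c : R[X]).natDegree = k := by
  refine natDegree_eq_of_degree_eq_some ?_
  rw [recurrencePoly, degree_sub_eq_left_of_degree_lt, degree_X_pow]
  rw [degree_X_pow]
  exact degree_sum_C_mul_X_pow_sub_lt k c

theorem coeff_recurrencePoly {j : ℕ} (hj : j < k) :
    (recurrencePoly k c : R[X]).coeff j = -(c (k - j) : R) := by
  rw [recurrencePoly, coeff_sub, coeff_X_pow, if_neg hj.ne, finsetSum_coeff,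
    Finset.sum_eq_single (k - j)]
  · rw [coeff_C_mul_X_pow, if_pos (by omega), zero_sub]
  · intro i hi hij
    rw [coeff_C_mul_X_pow, if_neg (by simp only [Finset.mem_Icc] at hi; omega)]
  · intro h
    exact absurd (Finset.mem_Icc.2 ⟨by omega, by omega⟩) h

theorem map_recurrencePoly {S : Type*} [CommRing S] (f : R →+* S) :
    (recurrencePoly k c : R[X]).map f = recurrencePoly k c := by
  simp [recurrencePoly, Polynomial.map_sum]

theorem sum_mul_inv_pow_eq_one_of_isRoot {K : Type*} [Field K] {x : K} (hx : x ≠ 0)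
    (hroot : (recurrencePoly k c : K[X]).IsRoot x) :
    ∑ i ∈ Finset.Icc 1 k, (c i : K) * x⁻¹ ^ i = 1 := by
  simp only [IsRoot, recurrencePoly, eval_sub, eval_pow, eval_X, eval_finsetSum, eval_mul,
    eval_C, sub_eq_zero] at hroot
  have hxk : x ^ k ≠ 0 := pow_ne_zero k hx
  calc ∑ i ∈ Finset.Icc 1 k, (c i : K) * x⁻¹ ^ i
      = (∑ i ∈ Finset.Icc 1 k, (c i : K) * x ^ (k - i)) / x ^ k := by
        rw [Finset.sum_div]
        refine Finset.sum_congr rfl fun i hi => ?_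
        rw [inv_pow, mul_div_assoc, pow_sub₀ _ hx (Finset.mem_Icc.1 hi).2]
        field_simp
    _ = 1 := by rw [← hroot, div_self hxk]

theorem norm_lt_of_isRoot_recurrencePoly (hk : 1 ≤ k) (hck : 0 < c k)
    (hgcd : ((Finset.Icc 1 k).filter fun m => c m ≠ 0).gcd id = 1) {r : ℝ} (hr : 0 < r)
    (hroot : (recurrencePoly k c : ℝ[X]).IsRoot r) {z : ℂ}
    (hz : (recurrencePoly k c : ℂ[X]).IsRoot z) (hzr : z ≠ r) : ‖z‖ < r := by
  have hz₀ : z ≠ 0 := by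
    rintro rfl
    rw [IsRoot, ← coeff_zero_eq_eval_zero, coeff_recurrencePoly k c (by omega)] at hz
    simp only [Nat.sub_zero, neg_eq_zero, Nat.cast_eq_zero] at hz
    omega
  have hrC : (recurrencePoly k c : ℂ[X]).IsRoot (r : ℂ) := by
    rw [← map_recurrencePoly k c (algebraMap ℝ ℂ)]
    exact hroot.map (f := algebraMap ℝ ℂ)
  by_contra hle
  refine hzr (inv_injective ?_)
  rw [← Complex.ofReal_inv]
  refine eq_of_norm_le_of_sum_mul_pow_eq (a := fun i => (c i : ℝ)) (fun _ _ => Nat.cast_nonneg _)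
    (by simpa only [ne_eq, Nat.cast_eq_zero] using hgcd) (inv_pos.2 hr) ?_ ?_
  · rw [norm_inv]
    exact inv_anti₀ hr (not_lt.1 hle)
  · push_cast
    rw [sum_mul_inv_pow_eq_one_of_isRoot k c hz₀ hz,
      sum_mul_inv_pow_eq_one_of_isRoot k c (Complex.ofReal_ne_zero.2 hr.ne') hrC]

end RecurrencePoly

theorem eventually_coeff_modByMonic_recurrencePoly_nonneg {k : ℕ} (hk : 1 ≤ k) {c : ℕ → ℕ}
    (hck : 0 < c k) (hgcd : ((Finset.Icc 1 k).filter fun m => c m ≠ 0).gcd id = 1) {r : ℝ}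
    (hr : 0 < r) (hroot : (recurrencePoly k c : ℝ[X]).IsRoot r) {F : ℝ[X]} (hF : 0 < F.eval r) :
    ∀ᶠ T in atTop, ∀ j, 0 ≤ ((X ^ T * F) %ₘ recurrencePoly k c).coeff j := by
  refine eventually_coeff_modByMonic_nonneg (recurrencePoly_monic k c) hr hroot
    (fun i hi => ?_) ?_ (fun z hz hzr => ?_) hF
  · rw [natDegree_recurrencePoly] at hi
    rw [coeff_recurrencePoly k c hi, neg_nonpos]
    exact Nat.cast_nonneg _
  · rw [coeff_recurrencePoly k c (by omega), Nat.sub_zero, neg_neg_iff_pos]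
    exact_mod_cast hck
  · rw [map_recurrencePoly] at hz
    exact norm_lt_of_isRoot_recurrencePoly k c hk hck hgcd hr hroot hz hzr

section GammaPoly

variable {R : Type*} [CommRing R] (γ : ℕ → R) (m : ℕ)

noncomputable def gammaPoly : R[X] := ∑ i ∈ Finset.Icc 1 m, C (γ i) * X ^ (m - i)

theorem coeff_gammaPoly {i : ℕ} (hi : 1 ≤ i) (him : i ≤ m) :
    (gammaPoly γ m).coeff (m - i) = γ i := by
  rw [gammaPoly, finsetSum_coeff, Finset.sum_eq_single i]
  · rw [coeff_C_mul_X_pow, if_pos rfl]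
  · intro j hj hji
    rw [coeff_C_mul_X_pow, if_neg (by simp only [Finset.mem_Icc] at hj; omega)]
  · intro h
    exact absurd (Finset.mem_Icc.2 ⟨hi, him⟩) h

theorem natDegree_gammaPoly_le : (gammaPoly γ m).natDegree ≤ m - 1 :=
  natDegree_sum_le_of_forall_le _ _ fun i hi =>
    (natDegree_C_mul_X_pow_le _ _).trans (by simp only [Finset.mem_Icc] at hi; omega)

variable {γ m}

theorem gammaPoly_monic (hm : 1 ≤ m) (hγ : γ 1 = 1) : (gammaPoly γ m).Monic :=
  monic_of_natDegree_le_of_coeff_eq_one _ (natDegree_gammaPoly_le γ m)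
    (by rw [← hγ]; exact coeff_gammaPoly γ m le_rfl hm)

theorem natDegree_gammaPoly [Nontrivial R] (hm : 1 ≤ m) (hγ : γ 1 = 1) :
    (gammaPoly γ m).natDegree = m - 1 :=
  natDegree_eq_of_le_of_coeff_ne_zero (natDegree_gammaPoly_le γ m)
    (by rw [coeff_gammaPoly γ m le_rfl hm, hγ]; exact one_ne_zero)

end GammaPoly

theorem exists_monic_dvd_of_coeff_modByMonic_nonneg {P G : ℤ[X]} (hP : P.Monic) (hG : G.Monic)
    {T : ℕ} (hT : P.natDegree ≤ T) (hnonneg : ∀ j, 0 ≤ ((X ^ T * G) %ₘ P).coeff j) :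
    ∃ p : ℤ[X], p.Monic ∧ p.natDegree = T + G.natDegree ∧ P ∣ p ∧
      (∀ i, p.coeff (i + T) = G.coeff i) ∧ ∀ j < T, p.coeff j ≤ 0 := by
  have hrem : ((X ^ T * G) %ₘ P).degree < T :=
    (degree_modByMonic_lt _ hP).trans_le (degree_le_of_natDegree_le hT)
  have hXG : (X ^ T * G).Monic := (monic_X_pow T).mul hG
  have hXGdeg : (X ^ T * G).natDegree = T + G.natDegree := by
    rw [(monic_X_pow T).natDegree_mul hG, natDegree_X_pow]
  have hlt : ((X ^ T * G) %ₘ P).degree < (X ^ T * G).degree := by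
    rw [degree_eq_natDegree hXG.ne_zero, hXGdeg]
    exact hrem.trans_le (WithBot.coe_le_coe.2 (Nat.le_add_right _ _))
  refine ⟨X ^ T * G - (X ^ T * G) %ₘ P, hXG.sub_of_left hlt, ?_, ?_, fun i => ?_, fun j hj => ?_⟩
  · refine natDegree_eq_of_degree_eq_some ?_
    rw [degree_sub_eq_left_of_degree_lt hlt, degree_eq_natDegree hXG.ne_zero, hXGdeg]
  · exact ⟨(X ^ T * G) /ₘ P, by linear_combination -(modByMonic_add_div (X ^ T * G) P)⟩
  · rw [coeff_sub, coeff_X_pow_mul, coeff_eq_zero_of_degree_lt (hrem.trans_le ?_), sub_zero]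
    exact_mod_cast Nat.le_add_left T i
  · rw [coeff_sub, coeff_X_pow_mul', if_neg (not_le.2 hj), zero_sub, neg_nonpos]
    exact hnonneg j

/-- With `γ₁ = 1` and integers `γ₂, …, γ_m` satisfying `Γ_m(r) > 0`, there is a monic
integer polynomial `p` of some degree `N ≥ m-1`, divisible by `P`, whose leading
coefficients are `γ₁, …, γ_m` with no positive coefficients thereafter. -/
theorem derived_recurrence_integer
    (k : ℕ) (hk : 1 ≤ k) (c : ℕ → ℕ) (hck : 0 < c k)
    (hgcd : Finset.gcd ((Finset.Icc 1 k).filter fun m => c m ≠ 0) id = 1)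
    (P : Polynomial ℤ)
    (hP : P = X ^ k - ∑ i ∈ Finset.Icc 1 k, C (c i : ℤ) * X ^ (k - i))
    (r : ℝ) (hr : 0 < r) (hroot : Polynomial.aeval r P = 0)
    (m : ℕ) (hm : 1 ≤ m) (γ : ℕ → ℤ) (hγ1 : γ 1 = 1)
    (hΓ : 0 < ∑ i ∈ Finset.Icc 1 m, (γ i : ℝ) * r ^ (m - i)) :
    ∃ p : Polynomial ℤ, ∃ N : ℕ, m - 1 ≤ N ∧ p.Monic ∧ p.natDegree = N ∧ P ∣ p ∧
      (∀ i, 1 ≤ i → i ≤ m → p.coeff (N + 1 - i) = γ i) ∧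
      (∀ j, j + m ≤ N → p.coeff j ≤ 0) := by
  change P = recurrencePoly k c at hP
  subst hP
  have hPR : (recurrencePoly k c : ℤ[X]).map (algebraMap ℤ ℝ) = recurrencePoly k c :=
    map_recurrencePoly k c _
  have hpos : ∀ᶠ T in atTop, ∀ j, 0 ≤ ((X ^ T * gammaPoly γ m) %ₘ recurrencePoly k c).coeff j := by
    refine (eventually_coeff_modByMonic_recurrencePoly_nonneg hk hck hgcd hr
      (by rwa [← hPR, IsRoot, eval_map_algebraMap]) (F := (gammaPoly γ m).map (algebraMap ℤ ℝ))
      (by rw [eval_map_algebraMap]; simpa [gammaPoly] using hΓ)).mono fun T hT j => ?_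
    have hTj := hT j
    rw [← hPR, ← map_X (algebraMap ℤ ℝ), ← Polynomial.map_pow, ← Polynomial.map_mul,
      ← map_modByMonic _ (recurrencePoly_monic k c), coeff_map, algebraMap_int_eq,
      eq_intCast] at hTj
    exact_mod_cast hTj
  obtain ⟨T, hT, hkT⟩ := (hpos.and (eventually_ge_atTop k)).exists
  obtain ⟨p, hpm, hpdeg, hdvd, htop, hlow⟩ := exists_monic_dvd_of_coeff_modByMonic_nonneg
    (recurrencePoly_monic k c) (gammaPoly_monic hm hγ1)
    ((natDegree_recurrencePoly k c).trans_le hkT) hT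
  refine ⟨p, T + (m - 1), by omega, hpm, by rw [hpdeg, natDegree_gammaPoly hm hγ1], hdvd,
    fun i hi him => ?_, fun j hj => hlow j (by omega)⟩
  rw [show T + (m - 1) + 1 - i = m - i + T by omega, htop, coeff_gammaPoly γ m hi him]
end

section
/- Every ZLRR has a derived PLRR: there exist a positive integer L and non-negative integers d_1, …, d_L with d_1 > 0 and d_L > 0 such that P(x) divides the polynomial x^L − d_1 x^{L−1} − d_2 x^{L−2} − ⋯ − d_L in ℤ[x]. -/
/-!
Let `p = 1 - ∑ cᵢ xⁱ` be the reciprocal polynomial of `P` and `f` the coefficient sequence of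
`1 / p`, so `f₀ = 1` and `fₙ = ∑ cᵢ fₙ₋ᵢ`. Since the `i` with `cᵢ ≠ 0` have gcd `1`, `fₙ > 0` for
all large `n`. If `ρ ∈ (0, 1)` solves `∑ cᵢ ρⁱ = 1`, then `uₙ = ρⁿ fₙ` is a renewal sequence: each
term is a weighted average of the `k` before it. The band `[m, M]` containing a tail of `u`
therefore shrinks by a fixed factor every few steps, so `uₙ₊₁ / uₙ → 1`, and `f` is eventually
strictly increasing, since `fₙ₊₁ / fₙ = uₙ₊₁ / (ρ uₙ)`.

Truncate `(1 - x) / p` at a large degree `N` to get `q`. Then `p q = 1 - x` below degree `N + 1`.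
Above that, the coefficients of `p q` are `-∑ cᵢ (fⱼ - fⱼ₋₁)` with `j ≤ N` close to `N`: they are
`≤ 0`, and the one of degree `N + k` is `< 0`. Reflecting at degree `k + N` turns `p q` into a
multiple of `P` of the required form.
-/

open Finset Filter Polynomial

section Renewal

variable {k n : ℕ} {p a u : ℕ → ℝ}

def SatisfiesRecurrence (k : ℕ) (p a : ℕ → ℝ) : Prop :=
  ∀ v, k ≤ v → a v = ∑ i ∈ Icc 1 k, p i * a (v - i)

theorem SatisfiesRecurrence.affine (h : SatisfiesRecurrence k p a)
    (hp : ∑ i ∈ Icc 1 k, p i = 1) (α β : ℝ) :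
    SatisfiesRecurrence k p fun v => α * a v + β := by
  intro v hv
  simp only [mul_add, sum_add_distrib, ← sum_mul, hp, h v hv, mul_sum]
  ring_nf

theorem SatisfiesRecurrence.nonneg_of_window (h : SatisfiesRecurrence k p a)
    (hp : ∀ i, 0 ≤ p i) (hwin : ∀ v, n ≤ v → v < n + k → 0 ≤ a v) :
    ∀ v, n ≤ v → 0 ≤ a v := by
  intro v
  induction v using Nat.strong_induction_on with
  | _ v ih =>
    intro hv
    by_cases hvk : v < n + k
    · exact hwin v hv hvk
    rw [h v (by omega)]
    refine sum_nonneg fun i hi => mul_nonneg (hp i) (ih _ ?_ ?_) <;>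
      · have := mem_Icc.1 hi; omega

structure IsRenewalSeq_s12 (k : ℕ) (p u : ℕ → ℝ) : Prop where
  nonneg : ∀ i, 0 ≤ p i
  sum_eq_one : ∑ i ∈ Icc 1 k, p i = 1
  zero : u 0 = 1
  succ : ∀ s, 1 ≤ s → u s = ∑ i ∈ Icc 1 k, p i * if i ≤ s then u (s - i) else 0

namespace IsRenewalSeq_s12

theorem ne_zero (h : IsRenewalSeq_s12 k p u) : k ≠ 0 := by
  rintro rfl
  simpa using h.sum_eq_one

theorem satisfiesRecurrence (h : IsRenewalSeq_s12 k p u) : SatisfiesRecurrence k p u := by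
  intro v hv
  rw [h.succ v (by have := h.ne_zero; omega)]
  exact sum_congr rfl fun i hi => by rw [if_pos (by have := mem_Icc.1 hi; omega)]

theorem mul_le_shift (h : IsRenewalSeq_s12 k p u) (ha : SatisfiesRecurrence k p a)
    (ha₀ : ∀ v, n ≤ v → 0 ≤ a v) (s : ℕ) {v : ℕ} (hv : n + k ≤ v) :
    u s * a v ≤ a (v + s) := by
  induction s using Nat.strong_induction_on with
  | _ s ih =>
    rcases Nat.eq_zero_or_pos s with rfl | hs
    · simp [h.zero]
    rw [h.succ s hs, ha (v + s) (by omega), sum_mul]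
    refine sum_le_sum fun i hi => ?_
    have hi := mem_Icc.1 hi
    rw [mul_assoc]
    refine mul_le_mul_of_nonneg_left ?_ (h.nonneg i)
    split_ifs with his
    · rw [show v + s - i = v + (s - i) by omega]
      exact ih _ (by omega)
    · rw [zero_mul]
      exact ha₀ _ (by omega)

theorem mapsTo_of_window (h : IsRenewalSeq_s12 k p u) {m M : ℝ}
    (hwin : Set.MapsTo u (Set.Ico n (n + k)) (Set.Icc m M)) :
    Set.MapsTo u (Set.Ici n) (Set.Icc m M) := by
  have hrec := h.satisfiesRecurrence.affine h.sum_eq_one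
  have hlo := (hrec 1 (-m)).nonneg_of_window h.nonneg fun v hv hv' => by
    have := (hwin ⟨hv, hv'⟩).1; linarith
  have hhi := (hrec (-1) M).nonneg_of_window h.nonneg fun v hv hv' => by
    have := (hwin ⟨hv, hv'⟩).2; linarith
  intro v hv
  have h₁ := hlo v hv
  have h₂ := hhi v hv
  constructor <;> linarith

/-- With `M' = u j` the peak of `u` on a window, `u - m ≥ 0` spreads from `j` over the tail:
`u v - m ≥ u (v - j) * (u j - m) ≥ η * (M' - m)`, which lifts the lower end of the band. -/
theorem exists_band_gap_le (h : IsRenewalSeq_s12 k p u) {N : ℕ} {η m M : ℝ} (hη₀ : 0 ≤ η)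
    (hη₁ : η ≤ 1) (hη : ∀ s, N ≤ s → η ≤ u s) (hband : Set.MapsTo u (Set.Ici n) (Set.Icc m M)) :
    ∃ n' m' M', Set.MapsTo u (Set.Ici n') (Set.Icc m' M') ∧ m ≤ m' ∧
      M' - m' ≤ (1 - η) * (M - m) := by
  obtain ⟨j, hjW, hjmax⟩ := (Ico (n + k) (n + k + k)).exists_max_image u
    (nonempty_Ico.2 (by have := h.ne_zero; omega))
  have hj := mem_Ico.1 hjW
  have hupper := h.mapsTo_of_window (n := n + k) (m := m) (M := u j) fun v hv =>
    ⟨(hband (Set.mem_Ici.2 (by have := hv.1; omega))).1, hjmax v (by simpa using hv)⟩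
  have hbj := hband (Set.mem_Ici.2 (by omega : n ≤ j))
  have hgap₀ : 0 ≤ u j - m := sub_nonneg.2 hbj.1
  refine ⟨j + N, m + η * (u j - m), u j, fun v hv => ⟨?_, (hupper ?_).2⟩, ?_, ?_⟩
  · have hv : j + N ≤ v := hv
    have hshift := h.mul_le_shift (h.satisfiesRecurrence.affine h.sum_eq_one 1 (-m))
      (fun v hv => by have := (hband (Set.mem_Ici.2 hv)).1; linarith) (v - j) (by omega : n + k ≤ j)
    simp only [show j + (v - j) = v by omega] at hshift
    have := mul_le_mul_of_nonneg_right (hη (v - j) (by omega)) hgap₀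
    linarith
  · simp only [Set.mem_Ici] at hv ⊢
    omega
  · exact le_add_of_nonneg_right (mul_nonneg hη₀ hgap₀)
  · have := mul_le_mul_of_nonneg_left (sub_le_sub_right hbj.2 m) (sub_nonneg.2 hη₁)
    linarith

theorem exists_band_pos (h : IsRenewalSeq_s12 k p u) (hpos : ∀ᶠ s in atTop, 0 < u s) :
    ∃ N m₀ M₀, 0 < m₀ ∧ Set.MapsTo u (Set.Ici N) (Set.Icc m₀ M₀) := by
  obtain ⟨N, hN⟩ := hpos.exists_forall_of_atTop
  have hW : (Ico N (N + k)).Nonempty := nonempty_Ico.2 (by have := h.ne_zero; omega)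
  obtain ⟨j₀, hj₀, hmin⟩ := (Ico N (N + k)).exists_min_image u hW
  obtain ⟨j₁, -, hmax⟩ := (Ico N (N + k)).exists_max_image u hW
  exact ⟨N, u j₀, u j₁, hN j₀ (mem_Ico.1 hj₀).1,
    h.mapsTo_of_window fun v hv => ⟨hmin v (by simpa using hv), hmax v (by simpa using hv)⟩⟩

theorem exists_band_gap_le_pow (h : IsRenewalSeq_s12 k p u) {N : ℕ} {η m₀ M₀ : ℝ} (hη₀ : 0 ≤ η)
    (hη₁ : η ≤ 1) (hη : ∀ s, N ≤ s → η ≤ u s) (hband₀ : Set.MapsTo u (Set.Ici N) (Set.Icc m₀ M₀))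
    (j : ℕ) : ∃ n m M, Set.MapsTo u (Set.Ici n) (Set.Icc m M) ∧ m₀ ≤ m ∧
      M - m ≤ (1 - η) ^ j * (M₀ - m₀) := by
  induction j with
  | zero => exact ⟨N, m₀, M₀, hband₀, le_rfl, by simp⟩
  | succ j ih =>
    obtain ⟨n, m, M, hband, hm, hgap⟩ := ih
    obtain ⟨n', m', M', hband', hm', hgap'⟩ := h.exists_band_gap_le hη₀ hη₁ hη hband
    refine ⟨n', m', M', hband', hm.trans hm', hgap'.trans ?_⟩
    rw [pow_succ, mul_comm _ (1 - η), mul_assoc]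
    exact mul_le_mul_of_nonneg_left hgap (by linarith)

theorem exists_ratio_lt (h : IsRenewalSeq_s12 k p u) (hpos : ∀ᶠ s in atTop, 0 < u s) {r : ℝ}
    (hr : r < 1) : ∃ n, ∀ v w, n ≤ v → n ≤ w → r * u w < u v := by
  obtain ⟨N, m₀, M₀, hm₀, hband₀⟩ := h.exists_band_pos hpos
  set η := min m₀ 1
  have hη₀ : 0 < η := lt_min hm₀ one_pos
  have hη₁ : η ≤ 1 := min_le_right _ _
  have hsmall : ∀ᶠ j : ℕ in atTop, (1 - η) ^ j * (M₀ - m₀) < (1 - r) * m₀ :=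
    ((tendsto_pow_atTop_nhds_zero_of_lt_one (by linarith) (by linarith)).mul_const _).eventually
      (gt_mem_nhds (by rw [zero_mul]; exact mul_pos (by linarith) hm₀))
  obtain ⟨j, hj⟩ := hsmall.exists
  obtain ⟨n, m, M, hband, hm, hgap⟩ := h.exists_band_gap_le_pow hη₀.le hη₁
    (fun s hs => (min_le_left _ _).trans (hband₀ hs).1) hband₀ j
  refine ⟨n, fun v w hv hw => ?_⟩
  have hv := hband (Set.mem_Ici.2 hv)
  have hw := hband (Set.mem_Ici.2 hw)
  rcases le_or_gt r 0 with hr₀ | hr₀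
  · nlinarith [hv.1, hw.1]
  · have hMm : 0 ≤ M - m := by linarith [hv.1, hv.2]
    nlinarith [hv.1, mul_le_mul_of_nonneg_left hw.2 hr₀.le, mul_le_mul_of_nonneg_right hr.le hMm,
      mul_le_mul_of_nonneg_left hm (by linarith : (0 : ℝ) ≤ 1 - r)]

end IsRenewalSeq_s12

end Renewal

namespace ZLRR

variable {k : ℕ} {c : ℕ → ℕ}

def parts (k : ℕ) (c : ℕ → ℕ) : Finset ℕ := (Icc 1 k).filter fun m => c m ≠ 0

noncomputable def recipPoly (k : ℕ) (c : ℕ → ℕ) : ℤ[X] := 1 - ∑ i ∈ Icc 1 k, C (c i : ℤ) * X ^ i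

noncomputable def invSeries (k : ℕ) (c : ℕ → ℕ) : PowerSeries ℤ :=
  PowerSeries.invOfUnit (recipPoly k c) 1

noncomputable def fundSeq (k : ℕ) (c : ℕ → ℕ) (n : ℕ) : ℤ := PowerSeries.coeff n (invSeries k c)

theorem recipPoly_mul_invSeries : (recipPoly k c : PowerSeries ℤ) * invSeries k c = 1 :=
  PowerSeries.mul_invOfUnit _ _ (by simp [recipPoly])

theorem fundSeq_zero : fundSeq k c 0 = 1 := by
  simp [fundSeq, invSeries]

theorem fundSeq_eq_sum {n : ℕ} (hn : 1 ≤ n) :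
    fundSeq k c n = ∑ i ∈ Icc 1 k, c i * if i ≤ n then fundSeq k c (n - i) else 0 := by
  have h := congrArg (PowerSeries.coeff n) (recipPoly_mul_invSeries (k := k) (c := c))
  rw [recipPoly, ← coeToPowerSeries.ringHom_apply, map_sub, map_one, map_sum, sub_mul, sum_mul,
    map_sub, map_sum] at h
  simp only [map_mul, map_pow, coeToPowerSeries.ringHom_apply, coe_C, coe_X, mul_assoc,
    one_mul, PowerSeries.coeff_C_mul, PowerSeries.coeff_X_pow_mul', PowerSeries.coeff_one,
    if_neg (show n ≠ 0 by omega)] at h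
  exact sub_eq_zero.1 h

theorem fundSeq_nonneg (n : ℕ) : 0 ≤ fundSeq k c n := by
  induction n using Nat.strong_induction_on with
  | _ n ih =>
    rcases Nat.eq_zero_or_pos n with rfl | hn
    · rw [fundSeq_zero]
      exact zero_le_one
    rw [fundSeq_eq_sum hn]
    refine sum_nonneg fun i hi => mul_nonneg (Int.natCast_nonneg _) ?_
    split_ifs
    exacts [ih _ (by have := (mem_Icc.1 hi).1; omega), le_rfl]

theorem mul_fundSeq_le {i : ℕ} (hi : i ∈ Icc 1 k) (n : ℕ) :
    c i * fundSeq k c n ≤ fundSeq k c (i + n) := by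
  rw [fundSeq_eq_sum (n := i + n) (by have := (mem_Icc.1 hi).1; omega)]
  have h := single_le_sum
    (f := fun j => (c j : ℤ) * if j ≤ i + n then fundSeq k c (i + n - j) else 0)
    (fun j _ => mul_nonneg (Int.natCast_nonneg (c j))
      (by split_ifs; exacts [fundSeq_nonneg _, le_rfl])) hi
  rwa [if_pos (by omega), Nat.add_sub_cancel_left] at h

theorem fundSeq_pos_of_mem_closure {n : ℕ} (hn : n ∈ AddSubmonoid.closure (parts k c : Set ℕ)) :
    0 < fundSeq k c n := by
  induction hn using AddSubmonoid.closure_induction_left with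
  | zero =>
    rw [fundSeq_zero]
    exact one_pos
  | add_left i hi n _ ih =>
    rw [parts, coe_filter, Set.mem_ofPred_eq] at hi
    exact (mul_pos (by exact_mod_cast Nat.pos_of_ne_zero hi.2) ih).trans_le (mul_fundSeq_le hi.1 n)

theorem eventually_fundSeq_pos (hgcd : (parts k c).gcd id = 1) :
    ∀ᶠ n in atTop, 0 < fundSeq k c n := by
  obtain ⟨N, hN⟩ := Nat.exists_mem_closure_of_ge (parts k c : Set ℕ)
  have hdvd := Finset.dvd_gcd (s := parts k c) (f := id)
    fun i hi => Nat.setGcd_dvd_of_mem (s := parts k c) hi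
  rw [hgcd] at hdvd
  exact eventually_atTop.2
    ⟨N, fun n hn => fundSeq_pos_of_mem_closure (hN n hn (hdvd.trans (one_dvd n)))⟩

theorem one_lt_sum (hk : 2 ≤ k) (hck : 0 < c k) (hgcd : (parts k c).gcd id = 1) :
    1 < ∑ i ∈ Icc 1 k, c i := by
  by_contra! hsum
  have hkmem : k ∈ Icc 1 k := mem_Icc.2 ⟨by omega, le_rfl⟩
  have hsingle : parts k c = {k} := by
    refine eq_singleton_iff_unique_mem.2 ⟨mem_filter.2 ⟨hkmem, hck.ne'⟩, fun j hj => ?_⟩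
    by_contra hjk
    have := add_le_sum (f := c) (fun _ _ => Nat.zero_le _) (mem_filter.1 hj).1 hkmem hjk
    have := (mem_filter.1 hj).2
    omega
  rw [hsingle, gcd_singleton] at hgcd
  simp at hgcd
  omega

theorem exists_root (hsum : 1 < ∑ i ∈ Icc 1 k, c i) :
    ∃ ρ : ℝ, ρ ∈ Set.Ioo 0 1 ∧ ∑ i ∈ Icc 1 k, (c i : ℝ) * ρ ^ i = 1 := by
  have hcont : ContinuousOn (fun x : ℝ => ∑ i ∈ Icc 1 k, (c i : ℝ) * x ^ i) (Set.Icc 0 1) := by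
    fun_prop
  refine intermediate_value_Ioo zero_le_one hcont ⟨?_, ?_⟩
  · rw [sum_eq_zero fun i hi => by rw [zero_pow (by have := (mem_Icc.1 hi).1; omega), mul_zero]]
    exact one_pos
  · simp only [one_pow, mul_one]
    exact_mod_cast hsum

theorem isRenewalSeq {ρ : ℝ} (hρ : ∑ i ∈ Icc 1 k, (c i : ℝ) * ρ ^ i = 1) (hρ₀ : 0 ≤ ρ) :
    IsRenewalSeq_s12 k (fun i => c i * ρ ^ i) (fun s => ρ ^ s * fundSeq k c s) where
  nonneg i := by positivity
  sum_eq_one := hρ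
  zero := by simp [fundSeq_zero]
  succ s hs := by
    rw [fundSeq_eq_sum hs, Int.cast_sum, mul_sum]
    refine sum_congr rfl fun i _ => ?_
    split_ifs with his
    · rw [← Nat.add_sub_cancel' his, pow_add, Nat.add_sub_cancel_left]
      push_cast
      ring
    · simp

theorem eventually_fundSeq_lt_succ (hk : 2 ≤ k) (hck : 0 < c k)
    (hgcd : (parts k c).gcd id = 1) : ∀ᶠ v in atTop, fundSeq k c v < fundSeq k c (v + 1) := by
  obtain ⟨ρ, ⟨hρ₀, hρ₁⟩, hρ⟩ := exists_root (one_lt_sum hk hck hgcd)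
  obtain ⟨n, hn⟩ := (isRenewalSeq hρ hρ₀.le).exists_ratio_lt
    ((eventually_fundSeq_pos hgcd).mono fun s hs => mul_pos (pow_pos hρ₀ s) (Int.cast_pos.2 hs))
    hρ₁
  refine eventually_atTop.2 ⟨n, fun v hv => ?_⟩
  have h := hn (v + 1) v (by omega) hv
  rw [← mul_assoc, ← pow_succ', mul_lt_mul_iff_right₀ (pow_pos hρ₀ _)] at h
  exact_mod_cast h

theorem natDegree_recipPoly_le : (recipPoly k c).natDegree ≤ k := by
  refine (natDegree_sub_le_of_le (m := 0) (by simp)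
    (natDegree_sum_le_of_forall_le _ _ fun i hi => ?_)).trans (max_le (Nat.zero_le k) le_rfl)
  exact (natDegree_C_mul_X_pow_le _ _).trans (mem_Icc.1 hi).2

theorem coeff_recipPoly_mul (q : ℤ[X]) (m : ℕ) :
    (recipPoly k c * q).coeff m =
      q.coeff m - ∑ i ∈ Icc 1 k, c i * if i ≤ m then q.coeff (m - i) else 0 := by
  simp only [recipPoly, sub_mul, one_mul, sum_mul, coeff_sub, finsetSum_coeff, mul_assoc,
    coeff_C_mul, coeff_X_pow_mul']

theorem coeff_recipPoly_mul_le {q : ℤ[X]} {m : ℕ} (hqm : q.coeff m = 0)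
    (hq : ∀ b, m ≤ b + k → b < m → 0 ≤ q.coeff b) {j : ℕ} (hj : j ∈ Icc 1 k) (hjm : j ≤ m) :
    (recipPoly k c * q).coeff m ≤ -(c j * q.coeff (m - j)) := by
  rw [coeff_recipPoly_mul, hqm, zero_sub, neg_le_neg_iff]
  have hterm : ∀ i ∈ Icc 1 k, 0 ≤ (c i : ℤ) * if i ≤ m then q.coeff (m - i) else 0 := by
    intro i hi
    have hi := mem_Icc.1 hi
    refine mul_nonneg (Int.natCast_nonneg _) ?_
    split_ifs
    exacts [hq _ (by omega) (by omega), le_rfl]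
  have h := single_le_sum hterm hj
  rwa [if_pos hjm] at h

theorem coeff_mul_trunc {R : Type*} [CommSemiring R] {p : R[X]} {G H : PowerSeries R}
    (h : (p : PowerSeries R) * G = H) {m n : ℕ} (hm : m < n) :
    (p * PowerSeries.trunc n G).coeff m = PowerSeries.coeff m H := by
  rw [← Polynomial.coeff_coe, ← PowerSeries.coeff_coe_trunc_of_lt hm, Polynomial.coe_mul,
    PowerSeries.trunc_mul_trunc, h, PowerSeries.coeff_coe_trunc_of_lt hm]

noncomputable def multiplier (k : ℕ) (c : ℕ → ℕ) (N : ℕ) : ℤ[X] :=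
  PowerSeries.trunc (N + 1) ((1 - PowerSeries.X) * invSeries k c)

theorem coeff_recipPoly_mul_multiplier {N m : ℕ} (hm : m ≤ N) :
    (recipPoly k c * multiplier k c N).coeff m = PowerSeries.coeff m (1 - PowerSeries.X) :=
  coeff_mul_trunc (by rw [mul_left_comm, recipPoly_mul_invSeries, mul_one]) (by omega)

theorem coeff_multiplier_succ {N b : ℕ} (hb : b + 1 ≤ N) :
    (multiplier k c N).coeff (b + 1) = fundSeq k c (b + 1) - fundSeq k c b := by
  rw [multiplier, PowerSeries.coeff_trunc, if_pos (by omega), sub_mul, one_mul, map_sub,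
    PowerSeries.coeff_succ_X_mul]
  rfl

theorem coeff_multiplier_of_lt {N b : ℕ} (hb : N < b) : (multiplier k c N).coeff b = 0 := by
  rw [multiplier, PowerSeries.coeff_trunc, if_neg (by omega)]

theorem coeff_multiplier_nonneg {n N b : ℕ}
    (hinc : ∀ v, n ≤ v → fundSeq k c v < fundSeq k c (v + 1)) (hb : n < b) :
    0 ≤ (multiplier k c N).coeff b := by
  rcases le_or_gt b N with hbN | hbN
  · obtain ⟨b, rfl⟩ : ∃ b', b = b' + 1 := ⟨b - 1, by omega⟩
    rw [coeff_multiplier_succ hbN]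
    linarith [hinc b (by omega)]
  · rw [coeff_multiplier_of_lt hbN]

theorem coeff_multiplier_self_pos {n N : ℕ}
    (hinc : ∀ v, n ≤ v → fundSeq k c v < fundSeq k c (v + 1)) (hN : n < N) :
    0 < (multiplier k c N).coeff N := by
  obtain ⟨N, rfl⟩ : ∃ N', N = N' + 1 := ⟨N - 1, by omega⟩
  rw [coeff_multiplier_succ le_rfl]
  linarith [hinc N (by omega)]

theorem exists_recipPoly_mul_coeff (hk : 2 ≤ k) (hck : 0 < c k) (hgcd : (parts k c).gcd id = 1) :
    ∃ N, ∃ q : ℤ[X], q.natDegree ≤ N ∧ (recipPoly k c * q).coeff 0 = 1 ∧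
      (recipPoly k c * q).coeff 1 = -1 ∧ (∀ m, 1 ≤ m → (recipPoly k c * q).coeff m ≤ 0) ∧
      (recipPoly k c * q).coeff (k + N) < 0 := by
  obtain ⟨n, hinc⟩ := (eventually_fundSeq_lt_succ hk hck hgcd).exists_forall_of_atTop
  set q := multiplier k c (n + k)
  have hhigh : ∀ m, n + k < m → (recipPoly k c * q).coeff m ≤ -(c k * q.coeff (m - k)) :=
    fun m hm => coeff_recipPoly_mul_le (coeff_multiplier_of_lt hm)
      (fun b _ _ => coeff_multiplier_nonneg hinc (by omega)) (mem_Icc.2 ⟨by omega, le_rfl⟩)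
      (by omega)
  refine ⟨n + k, q, Nat.lt_succ_iff.1 (PowerSeries.natDegree_trunc_lt _ _), ?_, ?_, ?_, ?_⟩
  · rw [coeff_recipPoly_mul_multiplier (Nat.zero_le _)]
    simp
  · rw [coeff_recipPoly_mul_multiplier (by omega)]
    simp
  · intro m hm
    rcases le_or_gt m (n + k) with h | h
    · rw [coeff_recipPoly_mul_multiplier h]
      simp only [map_sub, PowerSeries.coeff_one, PowerSeries.coeff_X]
      split_ifs <;> omega
    · exact (hhigh m h).trans (neg_nonpos.2 (mul_nonneg (by positivity)
        (coeff_multiplier_nonneg hinc (by omega))))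
  · refine (hhigh _ (by omega)).trans_lt ?_
    rw [Nat.add_sub_cancel_left]
    exact neg_neg_of_pos
      (mul_pos (by exact_mod_cast hck) (coeff_multiplier_self_pos hinc (by omega)))

theorem eq_one_sub_sum_of_coeff_nonpos {r : ℤ[X]} {L : ℕ} (hdeg : r.natDegree ≤ L)
    (h0 : r.coeff 0 = 1) (hneg : ∀ m, 1 ≤ m → r.coeff m ≤ 0) :
    r = 1 - ∑ i ∈ Icc 1 L, C ((-r.coeff i).toNat : ℤ) * X ^ i := by
  ext m
  simp only [coeff_sub, coeff_one, finsetSum_coeff, coeff_C_mul_X_pow, sum_ite_eq, mem_Icc]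
  rcases Nat.eq_zero_or_pos m with rfl | hm
  · simp [h0]
  by_cases hmL : m ≤ L
  · rw [if_neg hm.ne', if_pos ⟨hm, hmL⟩, Int.toNat_of_nonneg (neg_nonneg.2 (hneg m hm))]
    ring
  · rw [if_neg hm.ne', if_neg (by omega), coeff_eq_zero_of_natDegree_lt (by omega)]
    ring

theorem reflect_one_sub_sum {R : Type*} [Ring R] (n : ℕ) (a : ℕ → R) :
    reflect n (1 - ∑ i ∈ Icc 1 n, C (a i) * X ^ i) =
      X ^ n - ∑ i ∈ Icc 1 n, C (a i) * X ^ (n - i) := by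
  have hsum := map_sum (⟨⟨reflect n, reflect_zero⟩, fun f g => reflect_add f g n⟩ : R[X] →+ R[X])
    (fun i => C (a i) * X ^ i) (Icc 1 n)
  simp only [AddMonoidHom.coe_mk, ZeroHom.coe_mk] at hsum
  rw [reflect_sub, reflect_one, hsum]
  congr 1
  exact sum_congr rfl fun i hi => by rw [reflect_C_mul_X_pow, revAt_le (mem_Icc.1 hi).2]

end ZLRR

open Polynomial

theorem zlrr_has_derived_plrr_general
    (k : ℕ) (hk : 2 ≤ k) (c : ℕ → ℕ) (hck : 0 < c k)
    (hgcd : Finset.gcd ((Finset.Icc 1 k).filter fun m => c m ≠ 0) id = 1)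
    (P : Polynomial ℤ)
    (hP : P = X ^ k - ∑ i ∈ Finset.Icc 1 k, C (c i : ℤ) * X ^ (k - i)) :
    ∃ L : ℕ, ∃ d : ℕ → ℕ, 0 < L ∧ 0 < d 1 ∧ 0 < d L ∧
      P ∣ (X ^ L - ∑ i ∈ Finset.Icc 1 L, C (d i : ℤ) * X ^ (L - i)) := by
  obtain ⟨N, q, hq, h0, h1, hneg, htop⟩ := ZLRR.exists_recipPoly_mul_coeff hk hck hgcd
  have hr := ZLRR.eq_one_sub_sum_of_coeff_nonpos
    (natDegree_mul_le_of_le ZLRR.natDegree_recipPoly_le hq) h0 hneg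
  refine ⟨k + N, fun i => (-(ZLRR.recipPoly k c * q).coeff i).toNat, by omega, by simp [h1],
    by simpa using htop, ?_⟩
  rw [hP, ← ZLRR.reflect_one_sub_sum, ← ZLRR.reflect_one_sub_sum, ← hr,
    reflect_mul _ _ ZLRR.natDegree_recipPoly_le hq]
  exact dvd_mul_right _ _

/-- Every ZLRR has a derived PLRR: there exist `L ≥ 1` and non-negative integers
`d₁, …, d_L` with `d₁ > 0` and `d_L > 0` such that `P(x)` divides
`x^L - d₁ x^(L-1) - ⋯ - d_L` in `ℤ[x]`. -/
theorem zlrr_has_derived_plrr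
    (k : ℕ) (hk : 2 ≤ k) (c : ℕ → ℕ) (hc1 : c 1 = 0) (hck : 0 < c k)
    (hgcd : Finset.gcd ((Finset.Icc 1 k).filter fun m => c m ≠ 0) id = 1)
    (P : Polynomial ℤ)
    (hP : P = X ^ k - ∑ i ∈ Finset.Icc 1 k, C (c i : ℤ) * X ^ (k - i)) :
    ∃ L : ℕ, ∃ d : ℕ → ℕ, 0 < L ∧ 0 < d 1 ∧ 0 < d L ∧
      P ∣ (X ^ L - ∑ i ∈ Finset.Icc 1 L, C (d i : ℤ) * X ^ (L - i)) :=
  zlrr_has_derived_plrr_general k hk c hck hgcd P hP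
end

section
/- In the modified Zeroing Algorithm, define p_t(x) = x^k·Γ_t(x) + Q_t(x). Then for every t ≥ 1: (i) P(x) divides p_t(x); and (ii) Q_t(x) has degree at most k−1, so that the coefficient of x^{k+t−i} in p_t(x) equals γ_i for 1 ≤ i ≤ t. -/
open Polynomial

lemma mza_coeff_helper (k t : ℕ) (γ : ℕ → ℝ) (Q : Polynomial ℝ)
    (hQ : Q.degree < (k : ℕ)) (i : ℕ) (h1 : 1 ≤ i) (h2 : i ≤ t) :
    (X ^ k * (∑ j ∈ Finset.Icc 1 t, C (γ j) * X ^ (t - j)) + Q).coeff (k + t - i) = γ i := by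
  have hik : ((k : ℕ) : WithBot ℕ) ≤ ((k + t - i : ℕ) : WithBot ℕ) := by
    exact_mod_cast (by omega : k ≤ k + t - i)
  rw [coeff_add, coeff_eq_zero_of_degree_lt (lt_of_lt_of_le hQ hik), add_zero,
    Finset.mul_sum, finset_sum_coeff]
  have hre : ∀ j : ℕ, X ^ k * (C (γ j) * X ^ (t - j)) = C (γ j) * X ^ (k + (t - j)) := by
    intro j
    rw [mul_left_comm, ← pow_add]
  rw [Finset.sum_congr rfl fun j _ => by rw [hre j]]
  rw [Finset.sum_eq_single i]
  · rw [coeff_C_mul, coeff_X_pow, if_pos (by omega), mul_one]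
  · intro j hj hne
    have hjt : j ≤ t := (Finset.mem_Icc.mp hj).2
    have hj1 : 1 ≤ j := (Finset.mem_Icc.mp hj).1
    rw [coeff_C_mul, coeff_X_pow, if_neg (by omega), mul_zero]
  · intro h
    exact absurd (Finset.mem_Icc.mpr ⟨h1, h2⟩) h

/-- In the modified Zeroing Algorithm, with `p_t(x) = x^k·Γ_t(x) + Q_t(x)`:
(i) `P` divides `p_t`; (ii) `Q_t` has degree at most `k-1`, so the coefficient of
`x^(k+t-i)` in `p_t` equals `γ_i` for `1 ≤ i ≤ t`. -/
theorem modified_zeroing_algorithm_props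
    (k : ℕ) (hk : 1 ≤ k) (c : ℕ → ℕ) (hck : 0 < c k)
    (P : Polynomial ℝ)
    (hP : P = X ^ k - ∑ i ∈ Finset.Icc 1 k, C (c i : ℝ) * X ^ (k - i))
    (γ : ℕ → ℝ)
    (Q : ℕ → Polynomial ℝ)
    (hQ1 : Q 1 = C (γ 1) * (P - X ^ k))
    (hQt : ∀ t, 2 ≤ t →
      Q t = X * Q (t - 1) - C ((Q (t - 1)).coeff (k - 1) - γ t) * P - C (γ t) * X ^ k) :
    ∀ t, 1 ≤ t →
      P ∣ (X ^ k * (∑ i ∈ Finset.Icc 1 t, C (γ i) * X ^ (t - i)) + Q t) ∧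
      (Q t).degree < (k : ℕ) ∧
      ∀ i, 1 ≤ i → i ≤ t →
        (X ^ k * (∑ i ∈ Finset.Icc 1 t, C (γ i) * X ^ (t - i)) + Q t).coeff (k + t - i)
          = γ i := by
  -- coefficient of P at indices ≥ k
  have hPcoeff : ∀ m : ℕ, k ≤ m → P.coeff m = if m = k then 1 else 0 := by
    intro m hm
    rw [hP, coeff_sub, coeff_X_pow, finset_sum_coeff]
    rw [Finset.sum_eq_zero fun j hj => by
      have hj1 : 1 ≤ j := (Finset.mem_Icc.mp hj).1
      rw [coeff_C_mul, coeff_X_pow, if_neg (by omega), mul_zero]]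
    simp [eq_comm]
  -- main induction: divisibility and degree bound
  have main : ∀ t, 1 ≤ t →
      P ∣ (X ^ k * (∑ i ∈ Finset.Icc 1 t, C (γ i) * X ^ (t - i)) + Q t) ∧
      (Q t).degree < (k : ℕ) := by
    intro t ht
    induction t, ht using Nat.le_induction with
    | base =>
      have hΓ : (∑ i ∈ Finset.Icc 1 1, C (γ i) * X ^ (1 - i)) = C (γ 1) := by
        simp
      constructor
      · rw [hΓ, hQ1]
        exact ⟨C (γ 1), by ring⟩
      · rw [hQ1]
        have hS : (∑ i ∈ Finset.Icc 1 k, C ((c i : ℝ)) * X ^ (k - i)).degree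
            < (k : WithBot ℕ) := by
          refine lt_of_le_of_lt (degree_sum_le _ _) ?_
          rw [Finset.sup_lt_iff (by exact_mod_cast WithBot.bot_lt_coe k)]
          intro i hi
          have hi1 : 1 ≤ i := (Finset.mem_Icc.mp hi).1
          refine lt_of_le_of_lt (degree_C_mul_X_pow_le _ _) ?_
          exact_mod_cast (by omega : k - i < k)
        have : P - X ^ k = -(∑ i ∈ Finset.Icc 1 k, C ((c i : ℝ)) * X ^ (k - i)) := by
          rw [hP]; ring
        rw [this]
        calc (C (γ 1) * -(∑ i ∈ Finset.Icc 1 k, C ((c i : ℝ)) * X ^ (k - i))).degree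
            ≤ 0 + (-(∑ i ∈ Finset.Icc 1 k, C ((c i : ℝ)) * X ^ (k - i))).degree :=
              degree_mul_le_of_le degree_C_le le_rfl
          _ = (-(∑ i ∈ Finset.Icc 1 k, C ((c i : ℝ)) * X ^ (k - i))).degree := zero_add _
          _ = (∑ i ∈ Finset.Icc 1 k, C ((c i : ℝ)) * X ^ (k - i)).degree := degree_neg _
          _ < (k : WithBot ℕ) := hS
    | succ t ht ih =>
      obtain ⟨ihdvd, ihdeg⟩ := ih
      have hQrec := hQt (t + 1) (by omega)
      simp only [Nat.add_sub_cancel] at hQrec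
      set q : ℝ := (Q t).coeff (k - 1) with hq
      -- Γ recurrence
      have hΓ : (∑ i ∈ Finset.Icc 1 (t + 1), C (γ i) * X ^ (t + 1 - i))
          = X * (∑ i ∈ Finset.Icc 1 t, C (γ i) * X ^ (t - i)) + C (γ (t + 1)) := by
        rw [Finset.sum_Icc_succ_top (by omega), Finset.mul_sum]
        simp only [Nat.sub_self, pow_zero, mul_one]
        congr 1
        refine Finset.sum_congr rfl fun j hj => ?_
        have hjt : j ≤ t := (Finset.mem_Icc.mp hj).2
        rw [show t + 1 - j = (t - j) + 1 from by omega]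
        ring
      -- p_{t+1} = X * p_t - C (q - γ(t+1)) * P
      have hp : X ^ k * (∑ i ∈ Finset.Icc 1 (t + 1), C (γ i) * X ^ (t + 1 - i)) + Q (t + 1)
          = X * (X ^ k * (∑ i ∈ Finset.Icc 1 t, C (γ i) * X ^ (t - i)) + Q t)
            - C (q - γ (t + 1)) * P := by
        rw [hΓ, hQrec]; ring
      constructor
      · rw [hp]
        exact dvd_sub (ihdvd.mul_left X) (dvd_mul_left P _)
      · rw [degree_lt_iff_coeff_zero]
        intro m hm
        have hm' : (k : ℕ) ≤ m := by exact_mod_cast hm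
        obtain ⟨n, rfl⟩ : ∃ n, m = n + 1 := ⟨m - 1, by omega⟩
        rw [hQrec, coeff_sub, coeff_sub, coeff_C_mul, coeff_C_mul, coeff_X_pow,
          coeff_X_mul, hPcoeff _ hm']
        rcases eq_or_lt_of_le hm' with heq | hlt
        · have hn : n = k - 1 := by omega
          rw [if_pos heq.symm, hn, ← hq]
          ring
        · have : (Q t).coeff n = 0 := by
            apply coeff_eq_zero_of_degree_lt
            refine lt_of_lt_of_le ihdeg ?_
            exact_mod_cast (by omega : k ≤ n)
          rw [this, if_neg (by omega : ¬ n + 1 = k)]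
          ring
  intro t ht
  obtain ⟨hdvd, hdeg⟩ := main t ht
  exact ⟨hdvd, hdeg, fun i h1 h2 => mza_coeff_helper k t γ (Q t) hdeg i h1 h2⟩
end

section
/- In the modified Zeroing Algorithm, Q_t(r) = −r^k · Γ_t(r) for every t ≥ 1, where r is the principal root of P. -/
open Polynomial

/-- In the modified Zeroing Algorithm, `Q_t(r) = -r^k · Γ_t(r)` for every `t ≥ 1`,
where `r` is the principal root of `P`. -/
theorem modified_zeroing_algorithm_eval
    (k : ℕ) (hk : 1 ≤ k) (c : ℕ → ℕ) (hck : 0 < c k)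
    (P : Polynomial ℝ)
    (hP : P = X ^ k - ∑ i ∈ Finset.Icc 1 k, C (c i : ℝ) * X ^ (k - i))
    (r : ℝ) (hr : 0 < r) (hroot : P.IsRoot r)
    (huniq : ∀ s : ℝ, 0 < s → P.IsRoot s → s = r)
    (γ : ℕ → ℝ)
    (Q : ℕ → Polynomial ℝ)
    (hQ1 : Q 1 = C (γ 1) * (P - X ^ k))
    (hQt : ∀ t, 2 ≤ t →
      Q t = X * Q (t - 1) - C ((Q (t - 1)).coeff (k - 1) - γ t) * P - C (γ t) * X ^ k) :
    ∀ t, 1 ≤ t →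
      (Q t).eval r = -r ^ k * ∑ i ∈ Finset.Icc 1 t, γ i * r ^ (t - i) := by
  intro t ht
  have hPr : P.eval r = 0 := hroot
  induction t, ht using Nat.le_induction with
  | base =>
    simp [hQ1, hPr]
    ring
  | succ n hn ih =>
    rw [hQt (n + 1) (by omega)]
    simp only [Nat.add_sub_cancel]
    rw [Finset.sum_Icc_succ_top (by omega : 1 ≤ n + 1)]
    have hsum : ∑ i ∈ Finset.Icc 1 n, γ i * r ^ (n + 1 - i)
        = r * ∑ i ∈ Finset.Icc 1 n, γ i * r ^ (n - i) := by
      rw [Finset.mul_sum]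
      refine Finset.sum_congr rfl fun i hi => ?_
      have hi' : i ≤ n := (Finset.mem_Icc.mp hi).2
      have : n + 1 - i = (n - i) + 1 := by omega
      rw [this, pow_succ]
      ring
    simp only [eval_sub, eval_mul, eval_X, eval_C, eval_pow, hPr, ih, hsum]
    have h0 : n + 1 - (n + 1) = 0 := by omega
    rw [h0]
    ring
end

section
/- Let {a_n}_{n≥1} be a real sequence with initial values a_1, …, a_k satisfying a_{n+1} = c_1 a_n + c_2 a_{n−1} + ⋯ + c_k a_{n+1−k} for all n ≥ k. Define d_i = Σ_{j=1}^{i−1} a_j c_{i−j} for 2 ≤ i ≤ k, and Q(x) = a_1 x^{k−1} + (a_2 − d_2) x^{k−2} + (a_3 − d_3) x^{k−3} + ⋯ + (a_k − d_k). Then the limit L = lim_{n→∞} a_n / r^n exists, and L is positive, zero, or negative according as Q(r) is positive, zero, or negative. -/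
/-!
Dividing by `r ^ n` turns the recurrence into an averaging recurrence
`b (n + 1) = ∑ w i * b (n + 1 - i)` with weights `w i = c i / r ^ i ≥ 0` summing to `1`
(this is `P r = 0`). The maxima of `b` over windows of length `k` then decrease to some `u`.
If `b` dipped below `u - ε` infinitely often, the dip would be passed on, damped by a fixed
factor, to every later index `n + t` with `t` a sum of elements of the support of `w`; since
that support has gcd `1`, these `t` contain a whole window, whose maximum would then be
below `u`. Hence `b → u =: L`.

For the sign, the sum over `i < k` of `b (n + i + 1) - ∑_{j < i} w (i - j) * b (n + j + 1)`
does not depend on `n`: at `n = 0` it is `Q(r) / r ^ k`, and in the limit it is `L` times a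
positive constant.
-/

open Finset Filter Polynomial Topology

theorem Finset.eventually_mem_closure_of_gcd_eq_one (S : Finset ℕ) (h : S.gcd id = 1) :
    ∀ᶠ m in atTop, m ∈ AddSubmonoid.closure (S : Set ℕ) := by
  obtain ⟨n, hn⟩ := Nat.exists_mem_closure_of_ge (S : Set ℕ)
  have hS : Nat.setGcd S ∣ 1 := h ▸ Finset.dvd_gcd fun m hm => Nat.setGcd_dvd_of_mem hm
  exact eventually_atTop.2 ⟨n, fun m hm => hn m hm (hS.trans (one_dvd m))⟩

theorem sum_Icc_one_eq_sum_range {M : Type*} [AddCommMonoid M] (f : ℕ → M) (n : ℕ) :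
    ∑ i ∈ Icc 1 n, f i = ∑ i ∈ range n, f (i + 1) := by
  rw [← Ico_add_one_right_eq_Icc, sum_Ico_eq_sum_range, Nat.add_sub_cancel]
  simp only [add_comm 1]

theorem sum_range_sub_eq_sum_Icc {M : Type*} [AddCommMonoid M] (f : ℕ → M) (n : ℕ) :
    ∑ j ∈ range n, f (n - j) = ∑ i ∈ Icc 1 n, f i := by
  rw [sum_Icc_one_eq_sum_range, ← sum_range_reflect]
  refine sum_congr rfl fun j hj => ?_
  rw [mem_range] at hj
  congr 1
  omega

def SolvesRecurrence (k : ℕ) (w b : ℕ → ℝ) : Prop :=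
  ∀ n, k ≤ n → b (n + 1) = ∑ i ∈ Icc 1 k, w i * b (n + 1 - i)

section AveragingRecurrence

variable {k : ℕ} {w b : ℕ → ℝ}

theorem le_of_forall_mem_Ioc_le (hw : ∀ i, 0 ≤ w i) (hw1 : ∑ i ∈ Icc 1 k, w i = 1)
    (hb : SolvesRecurrence k w b) {n : ℕ} {M : ℝ}
    (hM : ∀ j ∈ Ioc n (n + k), b j ≤ M) (j : ℕ) (hj : n < j) : b j ≤ M := by
  induction j using Nat.strong_induction_on with
  | _ j ih =>
    by_cases hjk : j ≤ n + k
    · exact hM j (mem_Ioc.2 ⟨hj, hjk⟩)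
    obtain ⟨m, rfl⟩ : ∃ m, j = m + 1 := ⟨j - 1, by omega⟩
    calc b (m + 1) = ∑ i ∈ Icc 1 k, w i * b (m + 1 - i) := hb m (by omega)
      _ ≤ ∑ i ∈ Icc 1 k, w i * M := sum_le_sum fun i hi => by
          rw [mem_Icc] at hi
          exact mul_le_mul_of_nonneg_left (ih _ (by omega) (by omega)) (hw i)
      _ = M := by rw [← sum_mul, hw1, one_mul]

def DeficitPropagates (k : ℕ) (b : ℕ → ℝ) (t : ℕ) (ρ : ℝ) : Prop :=
  ∀ n M D, k ≤ n → 0 ≤ D → (∀ j, n ≤ j + k → b j ≤ M) → b n ≤ M - D →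
    b (n + t) ≤ M - ρ * D

theorem DeficitPropagates.mono {t : ℕ} {ρ σ : ℝ} (h : DeficitPropagates k b t ρ)
    (hσ : σ ≤ ρ) :
    DeficitPropagates k b t σ := fun n M D hn hD hM hbn =>
  (h n M D hn hD hM hbn).trans (by nlinarith)

theorem deficitPropagates_zero : DeficitPropagates k b 0 1 := fun n M D _ _ _ hbn => by
  simpa using hbn

theorem DeficitPropagates.add {s t : ℕ} {ρ σ : ℝ} (hs : DeficitPropagates k b s ρ)
    (ht : DeficitPropagates k b t σ) (hρ : 0 ≤ ρ) : DeficitPropagates k b (s + t) (σ * ρ) :=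
  fun n M D hn hD hM hbn => by
    rw [← add_assoc, mul_assoc]
    exact ht (n + s) M (ρ * D) (by omega) (mul_nonneg hρ hD) (fun j hj => hM j (by omega))
      (hs n M D hn hD hM hbn)

theorem deficitPropagates_of_mem (hw : ∀ i, 0 ≤ w i) (hw1 : ∑ i ∈ Icc 1 k, w i = 1)
    (hb : SolvesRecurrence k w b) {s : ℕ}
    (hs : s ∈ Icc 1 k) : DeficitPropagates k b s (w s) := fun n M D hn _ hM hbn => by
  rw [mem_Icc] at hs
  have hterm : ∀ i ∈ Icc 1 k,
      w i * b (n + s - i) ≤ w i * (M - if i = s then D else 0) := fun i hi => by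
    rw [mem_Icc] at hi
    refine mul_le_mul_of_nonneg_left ?_ (hw i)
    split_ifs with his
    · simpa [his] using hbn
    · simpa using hM _ (by omega)
  calc b (n + s) = ∑ i ∈ Icc 1 k, w i * b (n + s - i) := by
        simpa [show n + s - 1 + 1 = n + s by omega] using hb (n + s - 1) (by omega)
    _ ≤ ∑ i ∈ Icc 1 k, w i * (M - if i = s then D else 0) := sum_le_sum hterm
    _ = M - w s * D := by
        simp only [mul_sub, sum_sub_distrib, ← sum_mul, hw1, one_mul, mul_ite, mul_zero,
          sum_ite_eq', mem_Icc, hs, and_self, if_true]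

theorem exists_deficitPropagates (hw : ∀ i, 0 ≤ w i) (hw1 : ∑ i ∈ Icc 1 k, w i = 1)
    (hb : SolvesRecurrence k w b) {t : ℕ}
    (ht : t ∈ AddSubmonoid.closure (↑((Icc 1 k).filter fun i => w i ≠ 0) : Set ℕ)) :
    ∃ ρ > 0, DeficitPropagates k b t ρ := by
  induction ht using AddSubmonoid.closure_induction with
  | mem s hs =>
    rw [mem_coe, mem_filter] at hs
    exact ⟨w s, (hw s).lt_of_ne' hs.2, deficitPropagates_of_mem hw hw1 hb hs.1⟩
  | zero => exact ⟨1, one_pos, deficitPropagates_zero⟩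
  | add s t _ _ hs ht =>
    obtain ⟨ρ, hρ, hs⟩ := hs
    obtain ⟨σ, hσ, ht⟩ := ht
    exact ⟨σ * ρ, mul_pos hσ hρ, hs.add ht hρ.le⟩

theorem eventually_deficitPropagates (hw : ∀ i, 0 ≤ w i) (hw1 : ∑ i ∈ Icc 1 k, w i = 1)
    (hb : SolvesRecurrence k w b) {t : ℕ}
    (ht : t ∈ AddSubmonoid.closure (↑((Icc 1 k).filter fun i => w i ≠ 0) : Set ℕ)) :
    ∀ᶠ ρ in 𝓝[>] 0, DeficitPropagates k b t ρ := by
  obtain ⟨ρ, hρ, h⟩ := exists_deficitPropagates hw hw1 hb ht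
  filter_upwards [Ioc_mem_nhdsGT hρ] with σ hσ using h.mono hσ.2

theorem tendsto_of_forall_window (hw : ∀ i, 0 ≤ w i) (hw1 : ∑ i ∈ Icc 1 k, w i = 1)
    (hgcd : ((Icc 1 k).filter fun i => w i ≠ 0).gcd id = 1)
    (hb : SolvesRecurrence k w b) {u : ℝ}
    (hwindow : ∀ n, ∃ j ∈ Ioc n (n + k), u ≤ b j)
    (hup : ∀ a > u, ∀ᶠ j in atTop, b j < a) :
    Tendsto b atTop (𝓝 u) := by
  refine tendsto_order.2 ⟨fun a ha => ?_, hup⟩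
  by_contra hfreq
  rw [not_eventually] at hfreq
  obtain ⟨N, hN⟩ := eventually_atTop.1 (eventually_mem_closure_of_gcd_eq_one _ hgcd)
  obtain ⟨ρ, hprop, hρ⟩ := (((eventually_all_finset (range k)).2 fun i _ =>
    eventually_deficitPropagates hw hw1 hb (hN (N + 1 + i) (by omega))).and
    self_mem_nhdsWithin).exists
  -- the slack `δ` is small enough that `u + δ - ρ * (u + δ - a) < u`
  obtain ⟨δ, hδ, hδρ⟩ : ∃ δ > 0, ρ * (u - a) = 2 * δ :=
    ⟨ρ * (u - a) / 2, by have := mul_pos hρ (sub_pos.2 ha); positivity, by ring⟩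
  obtain ⟨n₁, hn₁⟩ := eventually_atTop.1 (hup (u + δ) (by linarith))
  obtain ⟨n₀, hn₀, hbn₀⟩ := frequently_atTop.1 hfreq (n₁ + k)
  obtain ⟨j, hj, huj⟩ := hwindow (n₀ + N)
  rw [mem_Ioc] at hj
  obtain ⟨i, hi, rfl⟩ : ∃ i < k, j = n₀ + (N + 1 + i) :=
    ⟨j - (n₀ + N + 1), by omega, by omega⟩
  have := hprop i (mem_range.2 hi) n₀ (u + δ) (u + δ - a) (by omega) (by linarith)
    (fun j' hj' => (hn₁ j' (by omega)).le) (by linarith [not_lt.1 hbn₀])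
  nlinarith [mul_pos hρ hδ]

theorem tendsto_of_averaging_recurrence (hw : ∀ i, 0 ≤ w i) (hw1 : ∑ i ∈ Icc 1 k, w i = 1)
    (hgcd : ((Icc 1 k).filter fun i => w i ≠ 0).gcd id = 1)
    (hb : SolvesRecurrence k w b) :
    ∃ L, Tendsto b atTop (𝓝 L) := by
  have hk : 0 < k := Nat.pos_of_ne_zero fun hk => by simp [hk] at hw1
  have hne (n : ℕ) : (Ioc n (n + k)).Nonempty := nonempty_Ioc.2 (by omega)
  set U : ℕ → ℝ := fun n => (Ioc n (n + k)).sup' (hne n) b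
  have hbU (n j : ℕ) (hj : n < j) : b j ≤ U n :=
    le_of_forall_mem_Ioc_le hw hw1 hb (fun j' hj' => le_sup' b hj') j hj
  have hU : Antitone U := antitone_nat_of_succ_le fun n =>
    sup'_le _ _ fun j hj => hbU n j (by rw [mem_Ioc] at hj; omega)
  have hb_neg : SolvesRecurrence k w (-b) := fun n hn => by simp [hb n hn, sum_neg_distrib]
  set m := (Ioc 0 (0 + k)).sup' (hne 0) (-b)
  have hbdd : BddBelow (Set.range U) := ⟨-m, by
    rintro _ ⟨n, rfl⟩
    have := le_of_forall_mem_Ioc_le hw hw1 hb_neg (M := m) (fun j hj => le_sup' (-b) hj)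
      (n + 1) (by omega)
    exact (neg_le.1 this).trans (hbU n (n + 1) (by omega))⟩
  refine ⟨⨅ n, U n, tendsto_of_forall_window hw hw1 hgcd hb (fun n => ?_) fun a ha => ?_⟩
  · obtain ⟨j, hj, hjU⟩ := exists_mem_eq_sup' (hne n) b
    exact ⟨j, hj, hjU ▸ ciInf_le hbdd n⟩
  · obtain ⟨n, hn⟩ :=
      eventually_atTop.1 ((tendsto_atTop_ciInf hU hbdd).eventually (gt_mem_nhds ha))
    exact eventually_atTop.2 ⟨n + 1, fun j hj => (hbU n j (by omega)).trans_lt (hn n le_rfl)⟩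

end AveragingRecurrence

section Conservation

variable {k : ℕ} {w b : ℕ → ℝ}

/-- The coefficients of `(1 - ∑ w i xⁱ) * ∑ b (n + i + 1) xⁱ` below `xᵏ`. -/
def recurrenceDefect (w b : ℕ → ℝ) (n i : ℕ) : ℝ :=
  b (n + i + 1) - ∑ j ∈ range i, w (i - j) * b (n + j + 1)

theorem recurrenceDefect_zero_right (n : ℕ) : recurrenceDefect w b n 0 = b (n + 1) := by
  simp [recurrenceDefect]

theorem recurrenceDefect_succ_left (n i : ℕ) :
    recurrenceDefect w b (n + 1) i = recurrenceDefect w b n (i + 1) + w (i + 1) * b (n + 1) := by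
  simp only [recurrenceDefect, sum_range_succ', Nat.add_sub_add_right, Nat.sub_zero]
  ring_nf

theorem recurrenceDefect_eq_zero (hb : SolvesRecurrence k w b)
    (n : ℕ) : recurrenceDefect w b n k = 0 := by
  rw [recurrenceDefect, sub_eq_zero, hb (n + k) (by omega), ← sum_range_sub_eq_sum_Icc]
  refine sum_congr rfl fun j hj => ?_
  rw [mem_range] at hj
  congr 2
  omega

theorem sum_recurrenceDefect_succ (hw1 : ∑ i ∈ Icc 1 k, w i = 1)
    (hb : SolvesRecurrence k w b) (n : ℕ) :
    ∑ i ∈ range k, recurrenceDefect w b (n + 1) i =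
      ∑ i ∈ range k, recurrenceDefect w b n i := by
  have hshift := sum_range_succ' (recurrenceDefect w b n) k
  rw [sum_range_succ, recurrenceDefect_eq_zero hb, recurrenceDefect_zero_right] at hshift
  rw [sum_Icc_one_eq_sum_range] at hw1
  simp only [recurrenceDefect_succ_left, sum_add_distrib, ← sum_mul, hw1, one_mul]
  linarith

theorem sum_recurrenceDefect_eq (hw1 : ∑ i ∈ Icc 1 k, w i = 1)
    (hb : SolvesRecurrence k w b) (n : ℕ) :
    ∑ i ∈ range k, recurrenceDefect w b n i = ∑ i ∈ range k, recurrenceDefect w b 0 i := by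
  induction n with
  | zero => rfl
  | succ n ih => rw [sum_recurrenceDefect_succ hw1 hb, ih]

/-- Equal to the mean `∑ i * w i` when `∑ w i = 1`. -/
def defectWeight (k : ℕ) (w : ℕ → ℝ) : ℝ :=
  ∑ i ∈ range k, (1 - ∑ j ∈ range i, w (i - j))

theorem tendsto_sum_recurrenceDefect {L : ℝ} (hL : Tendsto b atTop (𝓝 L)) :
    Tendsto (fun n => ∑ i ∈ range k, recurrenceDefect w b n i) atTop
      (𝓝 (L * defectWeight k w)) := by
  have hshift (m : ℕ) : Tendsto (fun n => b (n + m + 1)) atTop (𝓝 L) :=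
    hL.comp (tendsto_add_atTop_nat (m + 1))
  rw [defectWeight, mul_sum]
  refine tendsto_finsetSum _ fun i _ => ?_
  rw [mul_sub, mul_one, mul_sum]
  exact (hshift i).sub (tendsto_finsetSum _ fun j _ => by
    rw [mul_comm L]
    exact (hshift j).const_mul _)

theorem mul_defectWeight_eq (hw1 : ∑ i ∈ Icc 1 k, w i = 1)
    (hb : SolvesRecurrence k w b) {L : ℝ}
    (hL : Tendsto b atTop (𝓝 L)) :
    L * defectWeight k w = ∑ i ∈ range k, recurrenceDefect w b 0 i :=
  tendsto_nhds_unique (tendsto_sum_recurrenceDefect hL) (by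
    simp_rw [sum_recurrenceDefect_eq hw1 hb]
    exact tendsto_const_nhds)

theorem defectWeight_pos (hw : ∀ i, 0 ≤ w i) (hw1 : ∑ i ∈ Icc 1 k, w i = 1)
    (hwk : 0 < w k) :
    0 < defectWeight k w := by
  obtain ⟨K, rfl⟩ : ∃ K, k = K + 1 :=
    Nat.exists_eq_succ_of_ne_zero fun hk => by simp [hk] at hw1
  have hterm (i : ℕ) :
      1 - ∑ j ∈ range i, w (i - j) = ∑ m ∈ Icc 1 (K + 1), w m - ∑ m ∈ Icc 1 i, w m := by
    rw [sum_range_sub_eq_sum_Icc, hw1]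
  rw [defectWeight, sum_range_succ]
  refine add_pos_of_nonneg_of_pos (sum_nonneg fun i hi => ?_) ?_
  · rw [hterm, sub_nonneg]
    exact sum_le_sum_of_subset_of_nonneg
      (Icc_subset_Icc le_rfl (by rw [mem_range] at hi; omega)) fun m _ _ => hw m
  · rw [hterm, sum_Icc_succ_top (by omega)]
    simpa using hwk

end Conservation

section Normalization

variable {k : ℕ} {c a : ℕ → ℝ} {r : ℝ}

theorem sum_div_pow_eq_one_of_isRoot (hr : r ≠ 0)
    (h : (X ^ k - ∑ i ∈ Icc 1 k, C (c i) * X ^ (k - i)).IsRoot r) :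
    ∑ i ∈ Icc 1 k, c i / r ^ i = 1 := by
  have hroot : r ^ k = ∑ i ∈ Icc 1 k, c i * r ^ (k - i) := by
    simpa [sub_eq_zero, eval_finsetSum] using h
  calc ∑ i ∈ Icc 1 k, c i / r ^ i = ∑ i ∈ Icc 1 k, c i * r ^ (k - i) / r ^ k :=
        sum_congr rfl fun i hi => by
          rw [mem_Icc] at hi
          rw [← Nat.sub_add_cancel hi.2, pow_add, Nat.sub_add_cancel hi.2]
          field_simp
    _ = 1 := by rw [← sum_div, ← hroot, div_self (pow_ne_zero k hr)]

theorem SolvesRecurrence.div_pow (hrec : SolvesRecurrence k c a) :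
    SolvesRecurrence k (fun i => c i / r ^ i) (fun n => a n / r ^ n) := fun n hn => by
  beta_reduce
  rw [hrec n hn, sum_div]
  refine sum_congr rfl fun i hi => ?_
  rw [mem_Icc] at hi
  rw [div_mul_div_comm, ← pow_add, Nat.add_sub_cancel' (by omega)]

theorem pow_mul_sum_recurrenceDefect_div_pow (hr : r ≠ 0) {d : ℕ → ℝ}
    (hd : ∀ i, d i = ∑ j ∈ Icc 1 (i - 1), a j * c (i - j)) :
    r ^ k * ∑ i ∈ range k, recurrenceDefect (fun i => c i / r ^ i) (fun n => a n / r ^ n) 0 i =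
      ∑ i ∈ Icc 1 k, (a i - d i) * r ^ (k - i) := by
  rw [sum_Icc_one_eq_sum_range, mul_sum]
  refine sum_congr rfl fun i hi => ?_
  rw [mem_range] at hi
  have hdi : d (i + 1) = ∑ j ∈ range i, a (j + 1) * c (i - j) := by
    simp only [hd, Nat.add_sub_cancel, sum_Icc_one_eq_sum_range, Nat.add_sub_add_right]
  have hdefect : recurrenceDefect (fun i => c i / r ^ i) (fun n => a n / r ^ n) 0 i =
      (a (i + 1) - d (i + 1)) / r ^ (i + 1) := by
    rw [recurrenceDefect, hdi, sub_div, sum_div, zero_add]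
    congr 1
    refine sum_congr rfl fun j hj => ?_
    rw [mem_range] at hj
    rw [zero_add, div_mul_div_comm, ← pow_add, show i - j + (j + 1) = i + 1 by omega,
      mul_comm (c _)]
  rw [hdefect, show r ^ k = r ^ (k - (i + 1)) * r ^ (i + 1) by
    rw [← pow_add, Nat.sub_add_cancel hi]]
  field_simp

end Normalization

theorem divergence_determination_general
    (k : ℕ) (c : ℕ → ℕ) (hck : 0 < c k)
    (hgcd : Finset.gcd ((Finset.Icc 1 k).filter fun m => c m ≠ 0) id = 1)
    (P : Polynomial ℝ)
    (hP : P = X ^ k - ∑ i ∈ Finset.Icc 1 k, C (c i : ℝ) * X ^ (k - i))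
    (r : ℝ) (hr : 0 < r) (hroot : P.IsRoot r)
    (a : ℕ → ℝ)
    (hrec : ∀ n, k ≤ n → a (n + 1) = ∑ i ∈ Finset.Icc 1 k, (c i : ℝ) * a (n + 1 - i))
    (d : ℕ → ℝ)
    (hd : ∀ i, d i = ∑ j ∈ Finset.Icc 1 (i - 1), a j * (c (i - j) : ℝ))
    (Qr : ℝ)
    (hQr : Qr = ∑ i ∈ Finset.Icc 1 k, (a i - d i) * r ^ (k - i)) :
    ∃ L : ℝ,
      Filter.Tendsto (fun n => a n / r ^ n) Filter.atTop (nhds L) ∧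
      (0 < Qr → 0 < L) ∧ (Qr = 0 → L = 0) ∧ (Qr < 0 → L < 0) := by
  set w : ℕ → ℝ := fun i => (c i : ℝ) / r ^ i
  have hw (i : ℕ) : 0 ≤ w i := by positivity
  have hw1 : ∑ i ∈ Icc 1 k, w i = 1 := sum_div_pow_eq_one_of_isRoot hr.ne' (hP ▸ hroot)
  have hsupp : ((Icc 1 k).filter fun i => w i ≠ 0) = (Icc 1 k).filter fun m => c m ≠ 0 :=
    filter_congr fun i _ => by simp [w, hr.ne']
  set b : ℕ → ℝ := fun n => a n / r ^ n
  have hb : SolvesRecurrence k w b := SolvesRecurrence.div_pow hrec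
  obtain ⟨L, hL⟩ := tendsto_of_averaging_recurrence hw hw1 (hsupp ▸ hgcd) hb
  have hpos : 0 < defectWeight k w * r ^ k :=
    mul_pos (defectWeight_pos hw hw1 (by positivity)) (pow_pos hr k)
  have hLQ : L = Qr / (defectWeight k w * r ^ k) := by
    rw [eq_div_iff hpos.ne', hQr,
      ← pow_mul_sum_recurrenceDefect_div_pow (c := fun i => (c i : ℝ)) hr.ne' hd,
      ← mul_defectWeight_eq hw1 hb hL]
    ring
  exact ⟨L, hL, fun h => hLQ ▸ div_pos h hpos, fun h => by rw [hLQ, h, zero_div],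
    fun h => hLQ ▸ div_neg_of_neg_of_pos h hpos⟩

/-- Fast determination of divergence: for a real sequence `a` (indexed from 1)
satisfying the recurrence, with `d_i = Σ_{j=1}^{i-1} a_j c_{i-j}` and
`Q(x) = a₁ x^(k-1) + (a₂-d₂) x^(k-2) + ⋯ + (a_k-d_k)`, the limit `L = lim a_n / r^n`
exists, and `L` is positive, zero, or negative according as `Q(r)` is. -/
theorem divergence_determination
    (k : ℕ) (hk : 1 ≤ k) (c : ℕ → ℕ) (hck : 0 < c k)
    (hgcd : Finset.gcd ((Finset.Icc 1 k).filter fun m => c m ≠ 0) id = 1)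
    (P : Polynomial ℝ)
    (hP : P = X ^ k - ∑ i ∈ Finset.Icc 1 k, C (c i : ℝ) * X ^ (k - i))
    (r : ℝ) (hr : 0 < r) (hroot : P.IsRoot r)
    (a : ℕ → ℝ)
    (hrec : ∀ n, k ≤ n → a (n + 1) = ∑ i ∈ Finset.Icc 1 k, (c i : ℝ) * a (n + 1 - i))
    (d : ℕ → ℝ)
    (hd : ∀ i, d i = ∑ j ∈ Finset.Icc 1 (i - 1), a j * (c (i - j) : ℝ))
    (Qr : ℝ)
    (hQr : Qr = ∑ i ∈ Finset.Icc 1 k, (a i - d i) * r ^ (k - i)) :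
    ∃ L : ℝ,
      Filter.Tendsto (fun n => a n / r ^ n) Filter.atTop (nhds L) ∧
      (0 < Qr → 0 < L) ∧ (Qr = 0 → L = 0) ∧ (Qr < 0 → L < 0) :=
  divergence_determination_general k c hck hgcd P hP r hr hroot a hrec d hd Qr hQr
end

section
/- Suppose c_1 = 0 (the ZLRR case) and k ≥ 2, and run the Zeroing Algorithm. If t_0 ≥ 1 is such that q(1,t) ≤ 0 for all t ≥ t_0, then every coefficient of Q_{t_0 + k − 2} is ≤ 0; i.e., once q(1,t) becomes (and stays) non-positive, the Zeroing Algorithm terminates within the next k − 2 steps. -/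
open Polynomial

/-- In the ZLRR case (`c₁ = 0`, `k ≥ 2`), once `q(1,t)` becomes and stays non-positive
from step `t₀` on, every coefficient of `Q_{t₀+k-2}` is `≤ 0`: the Zeroing Algorithm
terminates within the next `k-2` steps. -/
theorem termination_after_q1_nonpositive
    (k : ℕ) (hk : 2 ≤ k) (c : ℕ → ℕ) (hc1 : c 1 = 0) (hck : 0 < c k)
    (P : Polynomial ℝ)
    (hP : P = X ^ k - ∑ i ∈ Finset.Icc 1 k, C (c i : ℝ) * X ^ (k - i))
    (β : ℕ → ℝ)
    (Q : ℕ → Polynomial ℝ)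
    (hQ0 : Q 0 = ∑ n ∈ Finset.Icc 1 k, C (β n) * X ^ (k - n))
    (hQt : ∀ t, 1 ≤ t → Q t = X * Q (t - 1) - C ((Q (t - 1)).coeff (k - 1)) * P)
    (t0 : ℕ) (ht0 : 1 ≤ t0)
    (hneg : ∀ t, t0 ≤ t → (Q t).coeff (k - 1) ≤ 0) :
    ∀ j : ℕ, (Q (t0 + k - 2)).coeff j ≤ 0 := by
  -- coefficients of the sum part of P
  set S : Polynomial ℝ := ∑ i ∈ Finset.Icc 1 k, C (c i : ℝ) * X ^ (k - i) with hS
  have hScoeff : ∀ j, j < k → S.coeff j = (c (k - j) : ℝ) := by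
    intro j hj
    rw [hS, Polynomial.finset_sum_coeff]
    simp only [coeff_C_mul, coeff_X_pow]
    rw [Finset.sum_eq_single (k - j)]
    · rw [if_pos (by omega : j = k - (k - j))]
      ring
    · intro i hi hne
      have hik : i ≤ k := (Finset.mem_Icc.mp hi).2
      have hi1 : 1 ≤ i := (Finset.mem_Icc.mp hi).1
      have : j ≠ k - i := fun h => hne (by omega)
      simp [this]
    · intro h
      exact absurd (Finset.mem_Icc.mpr ⟨by omega, by omega⟩) h
  have hScoeffhi : ∀ j, k ≤ j → S.coeff j = 0 := by
    intro j hj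
    rw [hS, Polynomial.finset_sum_coeff]
    apply Finset.sum_eq_zero
    intro i hi
    have hi1 : 1 ≤ i := (Finset.mem_Icc.mp hi).1
    have : j ≠ k - i := by omega
    simp [coeff_C_mul, coeff_X_pow, this]
  have hPcoeff : ∀ j, j < k → P.coeff j = -(c (k - j) : ℝ) := by
    intro j hj
    rw [hP, coeff_sub, coeff_X_pow, if_neg (by omega : j ≠ k), hScoeff j hj]
    ring
  have hPk : P.coeff k = 1 := by
    rw [hP, coeff_sub, coeff_X_pow, if_pos rfl, hScoeffhi k le_rfl]
    ring
  have hPhi : ∀ j, k < j → P.coeff j = 0 := by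
    intro j hj
    rw [hP, coeff_sub, coeff_X_pow, if_neg (by omega : j ≠ k), hScoeffhi j (by omega)]
    ring
  -- degree bound: coefficients at index ≥ k vanish
  have hdeg : ∀ t j, k ≤ j → (Q t).coeff j = 0 := by
    intro t
    induction t with
    | zero =>
      intro j hj
      rw [hQ0, Polynomial.finset_sum_coeff]
      apply Finset.sum_eq_zero
      intro i hi
      have hi1 : 1 ≤ i := (Finset.mem_Icc.mp hi).1
      have : j ≠ k - i := by omega
      simp [coeff_C_mul, coeff_X_pow, this]
    | succ t ih =>
      intro j hj
      have hrw := hQt (t + 1) (by omega)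
      simp only [Nat.add_sub_cancel] at hrw
      rw [hrw, coeff_sub, coeff_C_mul]
      obtain ⟨m, rfl⟩ : ∃ m, j = m + 1 := ⟨j - 1, by omega⟩
      rw [Polynomial.coeff_X_mul]
      rcases eq_or_lt_of_le hj with h | h
      · rw [← h, hPk]
        have : m = k - 1 := by omega
        rw [this]; ring
      · rw [ih m (by omega), hPhi (m + 1) h]; ring
  -- recurrence at coefficient level
  have hrec : ∀ t j, 1 ≤ j → j < k → (Q (t + 1)).coeff j
      = (Q t).coeff (j - 1) + (c (k - j) : ℝ) * (Q t).coeff (k - 1) := by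
    intro t j hj1 hjk
    have hrw := hQt (t + 1) (by omega)
    simp only [Nat.add_sub_cancel] at hrw
    rw [hrw, coeff_sub, coeff_C_mul]
    obtain ⟨m, rfl⟩ : ∃ m, j = m + 1 := ⟨j - 1, by omega⟩
    rw [Polynomial.coeff_X_mul, hPcoeff (m + 1) hjk]
    simp only [Nat.add_sub_cancel]
    ring
  have hrec0 : ∀ t, (Q (t + 1)).coeff 0 = (c k : ℝ) * (Q t).coeff (k - 1) := by
    intro t
    have hrw := hQt (t + 1) (by omega)
    simp only [Nat.add_sub_cancel] at hrw
    rw [hrw, coeff_sub, coeff_C_mul, Polynomial.mul_coeff_zero, Polynomial.coeff_X_zero,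
      hPcoeff 0 (by omega)]
    simp only [Nat.sub_zero]
    ring
  -- main propagation lemma
  have hA : ∀ j, j < k → ∀ t, t0 + j + 1 ≤ t → (Q t).coeff j ≤ 0 := by
    intro j
    induction j with
    | zero =>
      intro _ t ht
      obtain ⟨s, rfl⟩ : ∃ s, t = s + 1 := ⟨t - 1, by omega⟩
      rw [hrec0 s]
      have h1 : (Q s).coeff (k - 1) ≤ 0 := hneg s (by omega)
      have h2 : (0 : ℝ) ≤ (c k : ℝ) := Nat.cast_nonneg _
      exact mul_nonpos_of_nonneg_of_nonpos h2 h1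
    | succ j ih =>
      intro hjk t ht
      obtain ⟨s, rfl⟩ : ∃ s, t = s + 1 := ⟨t - 1, by omega⟩
      rw [hrec s (j + 1) (by omega) hjk]
      simp only [Nat.add_sub_cancel]
      have h1 : (Q s).coeff j ≤ 0 := ih (by omega) s (by omega)
      have h2 : (Q s).coeff (k - 1) ≤ 0 := hneg s (by omega)
      have h3 : (0 : ℝ) ≤ (c (k - (j + 1)) : ℝ) := Nat.cast_nonneg _
      have := mul_nonpos_of_nonneg_of_nonpos h3 h2
      linarith
  intro j
  rcases le_or_gt k j with hj | hj
  · rw [hdeg _ j hj]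
  rcases eq_or_lt_of_le (Nat.lt_iff_add_one_le.mp hj) with h1 | h1
  · -- j = k - 1
    have : j = k - 1 := by omega
    rw [this]
    exact hneg _ (by omega)
  rcases eq_or_lt_of_le (Nat.lt_iff_add_one_le.mp h1) with h2 | h2
  · -- j = k - 2 : use c 1 = 0
    have hj2 : j = k - 2 := by omega
    have key := hrec (t0 + k - 2) (k - 1) (by omega) (by omega)
    have hk1 : k - (k - 1) = 1 := by omega
    rw [hk1, hc1] at key
    have hnext : (Q (t0 + k - 2 + 1)).coeff (k - 1) ≤ 0 := hneg _ (by omega)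
    rw [key] at hnext
    simp only [Nat.cast_zero, zero_mul, add_zero] at hnext
    have : k - 1 - 1 = j := by omega
    rwa [this] at hnext
  · -- j ≤ k - 3
    exact hA j (by omega) (t0 + k - 2) (by omega)
end
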